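/- arXiv:1910.06992 — 5 statements merged into one kernel-verified Lean document; each statement's English description precedes it below -/
import Mathlib

section
/- Let n ≥ 2, β ∈ (0,1), α = 1 + β, and let u : ℝⁿ → ℝ be continuously differentiable on an open ball B_{R₀} centered at the origin. Define A(R) = R^{-(n+2(α-1))} ∫_{B_R} |∇u|² dx − α ∫_{S^{n-1}} (u(Rθ)/R^α)² dθ for 0 < R < R₀. Suppose that for every R in an open subinterval (a,b) ⊂ (0, R₀) the differential inequality A'(R) ≥ R^{-(1+2(α-1))} ∫_{S^{n-1}} (∂_ν u(Rθ) − α u(Rθ)/R)² dθ holds, where ∂_ν u(Rθ) = ∇u(Rθ)·θ. If A is constant on (a,b), then u is homogeneous of degree α on the annulus {x : a < |x| < b}, that is, u(tx) = t^α u(x) whenever x, tx both lie in the annulus with t > 0. -/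
open MeasureTheory Metric Set Filter
open scoped RealInnerProductSpace Topology Classical

noncomputable section

/-- Integral over the unit sphere `S^{n-1}` in `ℝⁿ` with its standard surface measure. -/
def sphInt (n : ℕ) (f : EuclideanSpace ℝ (Fin n) → ℝ) : ℝ :=
  ∫ θ : sphere (0 : EuclideanSpace ℝ (Fin n)) 1,
    f (θ : EuclideanSpace ℝ (Fin n)) ∂((volume : Measure (EuclideanSpace ℝ (Fin n))).toSphere)

/-- The Weiss-type monotonicity quantity
`A(R) = R^{-(n+2(α-1))} ∫_{B_R} |∇u|² - α ∫_{S^{n-1}} (u(Rθ)/R^α)²`. -/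
def Afun (n : ℕ) (α : ℝ) (u : EuclideanSpace ℝ (Fin n) → ℝ) (R : ℝ) : ℝ :=
  R ^ (-((n : ℝ) + 2 * (α - 1))) *
      (∫ x in ball (0 : EuclideanSpace ℝ (Fin n)) R, ‖gradient u x‖ ^ 2)
    - α * sphInt n (fun θ => (u (R • θ) / R ^ α) ^ 2)

/-- The α-homogeneous extension `w_R(x) = (|x|/R)^α u(R x/|x|)`, with `w_R 0 = 0`. -/
def homExt (n : ℕ) (α R : ℝ) (u : EuclideanSpace ℝ (Fin n) → ℝ)
    (x : EuclideanSpace ℝ (Fin n)) : ℝ :=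
  if x = 0 then 0 else (‖x‖ / R) ^ α * u ((R / ‖x‖) • x)

/-- The α-rescaling `u_R(x) = u(Rx)/R^α`. -/
def rescale (n : ℕ) (α : ℝ) (u : EuclideanSpace ℝ (Fin n) → ℝ) (R : ℝ)
    (x : EuclideanSpace ℝ (Fin n)) : ℝ :=
  u (R • x) / R ^ α

/-- The `toSphere` measure of an additive Haar measure is positive on open sets. -/
lemma toSphere_isOpenPosMeasure {E : Type*} [NormedAddCommGroup E] [NormedSpace ℝ E]
    [MeasurableSpace E] [BorelSpace E] [FiniteDimensional ℝ E] [Nontrivial E]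
    (μ : MeasureTheory.Measure E) [μ.IsAddHaarMeasure] :
    (μ.toSphere).IsOpenPosMeasure := by
  constructor
  intro U hU hne
  obtain ⟨θ, hθ⟩ := hne
  intro h0
  have hmp := MeasureTheory.Measure.measurePreserving_homeomorphUnitSphereProd μ
  have hIio : IsOpen (Iio (⟨1, mem_Ioi.2 one_pos⟩ : Ioi (0:ℝ))) := by
    have : (Iio (⟨1, mem_Ioi.2 one_pos⟩ : Ioi (0:ℝ))) =
        Subtype.val ⁻¹' (Iio (1:ℝ)) := rfl
    rw [this]; exact isOpen_Iio.preimage continuous_subtype_val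
  have hprod : IsOpen (U ×ˢ (Iio (⟨1, mem_Ioi.2 one_pos⟩ : Ioi (0:ℝ)))) := hU.prod hIio
  have hpre : IsOpen ((homeomorphUnitSphereProd E) ⁻¹'
      (U ×ˢ (Iio (⟨1, mem_Ioi.2 one_pos⟩ : Ioi (0:ℝ))))) :=
    hprod.preimage (homeomorphUnitSphereProd E).continuous
  have himg : IsOpen (Subtype.val '' ((homeomorphUnitSphereProd E) ⁻¹'
      (U ×ˢ (Iio (⟨1, mem_Ioi.2 one_pos⟩ : Ioi (0:ℝ)))))) :=
    (isOpen_compl_singleton).isOpenMap_subtype_val _ hpre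
  have hnemp : (Subtype.val '' ((homeomorphUnitSphereProd E) ⁻¹'
      (U ×ˢ (Iio (⟨1, mem_Ioi.2 one_pos⟩ : Ioi (0:ℝ)))))).Nonempty := by
    refine ⟨((homeomorphUnitSphereProd E).symm (θ, ⟨1/2, by norm_num⟩)).val, ?_⟩
    refine ⟨_, ?_, rfl⟩
    simp only [Set.mem_preimage, Homeomorph.apply_symm_apply, Set.mem_prod]
    exact ⟨hθ, show (⟨1/2, by norm_num⟩ : Ioi (0:ℝ)) < ⟨1, _⟩ from by
      rw [Subtype.mk_lt_mk]; norm_num⟩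
  have hμpos : 0 < μ (Subtype.val '' ((homeomorphUnitSphereProd E) ⁻¹'
      (U ×ˢ (Iio (⟨1, mem_Ioi.2 one_pos⟩ : Ioi (0:ℝ)))))) :=
    himg.measure_pos μ hnemp
  have hcomap : (μ.comap Subtype.val) ((homeomorphUnitSphereProd E) ⁻¹'
      (U ×ˢ (Iio (⟨1, mem_Ioi.2 one_pos⟩ : Ioi (0:ℝ))))) =
      μ (Subtype.val '' ((homeomorphUnitSphereProd E) ⁻¹'
      (U ×ˢ (Iio (⟨1, mem_Ioi.2 one_pos⟩ : Ioi (0:ℝ)))))) :=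
    comap_subtype_coe_apply (measurableSet_singleton _).compl _ _
  have hmeasprod : MeasurableSet (U ×ˢ (Iio (⟨1, mem_Ioi.2 one_pos⟩ : Ioi (0:ℝ)))) :=
    hprod.measurableSet
  have hpreim := hmp.measure_preimage hmeasprod.nullMeasurableSet
  rw [hcomap] at hpreim
  rw [hpreim, MeasureTheory.Measure.prod_prod, h0, zero_mul] at hμpos
  exact lt_irrefl _ hμpos

/-- A continuous nonnegative function on the sphere with zero integral vanishes. -/
lemma sphInt_eq_zero_of {n : ℕ} (hn : 2 ≤ n) (f : EuclideanSpace ℝ (Fin n) → ℝ)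
    (hf : Continuous fun θ : sphere (0 : EuclideanSpace ℝ (Fin n)) 1 =>
      f (θ : EuclideanSpace ℝ (Fin n)))
    (h0 : ∀ θ, 0 ≤ f θ) (hint : sphInt n f = 0) :
    ∀ θ : sphere (0 : EuclideanSpace ℝ (Fin n)) 1, f (θ : EuclideanSpace ℝ (Fin n)) = 0 := by
  haveI : Nonempty (Fin n) := ⟨⟨0, by omega⟩⟩
  haveI : Nontrivial (EuclideanSpace ℝ (Fin n)) := inferInstance
  haveI : CompactSpace (sphere (0 : EuclideanSpace ℝ (Fin n)) 1) :=
    isCompact_iff_compactSpace.mp (isCompact_sphere 0 1)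
  haveI := toSphere_isOpenPosMeasure (volume : Measure (EuclideanSpace ℝ (Fin n)))
  set g : sphere (0 : EuclideanSpace ℝ (Fin n)) 1 → ℝ :=
    fun θ => f (θ : EuclideanSpace ℝ (Fin n)) with hg
  have hcs : HasCompactSupport g := (isClosed_tsupport g).isCompact
  have hgi : Integrable g ((volume : Measure (EuclideanSpace ℝ (Fin n))).toSphere) :=
    hf.integrable_of_hasCompactSupport hcs
  have hae : g =ᵐ[(volume : Measure (EuclideanSpace ℝ (Fin n))).toSphere] 0 := by
    rw [← MeasureTheory.integral_eq_zero_iff_of_nonneg (fun θ => h0 _) hgi]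
    exact hint
  have : g = 0 := (hf.ae_eq_iff_eq _ continuous_const).mp hae
  intro θ
  exact congrFun this θ

/-- if `A' ≥ ∫_{S^{n-1}} (∂_ν u - α u/R)²` on `(a,b)` and `A` is constant
there, then `u` is homogeneous of degree `α` on the annulus `{a < |x| < b}`. -/
theorem constancy_of_A_implies_homogeneous {n : ℕ} (hn : 2 ≤ n) {β α R₀ a b : ℝ}
    (hβ : β ∈ Set.Ioo (0 : ℝ) 1) (hα : α = 1 + β) (hR₀ : 0 < R₀)
    (ha : 0 ≤ a) (hab : a < b) (hb : b ≤ R₀)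
    (u : EuclideanSpace ℝ (Fin n) → ℝ)
    (hu : ContDiffOn ℝ 1 u (ball (0 : EuclideanSpace ℝ (Fin n)) R₀))
    (hderiv : ∀ R ∈ Set.Ioo a b, DifferentiableAt ℝ (Afun n α u) R ∧
      R ^ (-(1 + 2 * (α - 1))) * sphInt n (fun θ =>
          (⟪gradient u (R • θ), θ⟫ - α * u (R • θ) / R) ^ 2) ≤
        deriv (Afun n α u) R)
    (hconst : ∀ R₁ ∈ Set.Ioo a b, ∀ R₂ ∈ Set.Ioo a b, Afun n α u R₁ = Afun n α u R₂) :
    ∀ x : EuclideanSpace ℝ (Fin n), ∀ t : ℝ, 0 < t →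
      a < ‖x‖ → ‖x‖ < b → a < ‖t • x‖ → ‖t • x‖ < b →
      u (t • x) = t ^ α * u x := by
  -- Step 1: the derivative of `Afun` vanishes on `(a, b)`.
  have hderiv0 : ∀ R ∈ Set.Ioo a b, deriv (Afun n α u) R = 0 := by
    intro R hR
    have hev : Afun n α u =ᶠ[𝓝 R] fun _ => Afun n α u R := by
      filter_upwards [isOpen_Ioo.mem_nhds hR] with y hy
      exact hconst y hy R hR
    rw [hev.deriv_eq, deriv_const]
  -- Step 2+3: the Rellich integrand vanishes identically on the sphere.
  have hgradcont : ContinuousOn (gradient u) (ball (0 : EuclideanSpace ℝ (Fin n)) R₀) := by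
    have hfd : ContinuousOn (fderiv ℝ u) (ball (0 : EuclideanSpace ℝ (Fin n)) R₀) :=
      hu.continuousOn_fderiv_of_isOpen isOpen_ball le_rfl
    exact (InnerProductSpace.toDual ℝ (EuclideanSpace ℝ (Fin n))).symm.continuous.comp_continuousOn hfd
  have hball : ∀ R ∈ Set.Ioo a b, ∀ θ : sphere (0 : EuclideanSpace ℝ (Fin n)) 1,
      R • (θ : EuclideanSpace ℝ (Fin n)) ∈ ball (0 : EuclideanSpace ℝ (Fin n)) R₀ := by
    intro R hR θ
    have hθ : ‖(θ : EuclideanSpace ℝ (Fin n))‖ = 1 := mem_sphere_zero_iff_norm.mp θ.2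
    have hRpos : 0 < R := lt_of_le_of_lt ha hR.1
    rw [mem_ball_zero_iff, norm_smul, hθ, mul_one, Real.norm_eq_abs, abs_of_pos hRpos]
    exact lt_of_lt_of_le hR.2 hb
  have key : ∀ R ∈ Set.Ioo a b, ∀ θ : sphere (0 : EuclideanSpace ℝ (Fin n)) 1,
      ⟪gradient u (R • (θ : EuclideanSpace ℝ (Fin n))), (θ : EuclideanSpace ℝ (Fin n))⟫ = α * u (R • (θ : EuclideanSpace ℝ (Fin n))) / R := by
    intro R hR
    have hRpos : 0 < R := lt_of_le_of_lt ha hR.1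
    have hrpow : (0 : ℝ) < R ^ (-(1 + 2 * (α - 1))) := Real.rpow_pos_of_pos hRpos _
    have hInonneg : 0 ≤ sphInt n (fun θ =>
        (⟪gradient u (R • θ), θ⟫ - α * u (R • θ) / R) ^ 2) :=
      integral_nonneg fun θ => sq_nonneg _
    have hle := (hderiv R hR).2
    rw [hderiv0 R hR] at hle
    have hI0 : sphInt n (fun θ =>
        (⟪gradient u (R • θ), θ⟫ - α * u (R • θ) / R) ^ 2) = 0 := by nlinarith
    have hcont : Continuous fun θ : sphere (0 : EuclideanSpace ℝ (Fin n)) 1 =>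
        (⟪gradient u (R • (θ : EuclideanSpace ℝ (Fin n))), (θ : EuclideanSpace ℝ (Fin n))⟫ - α * u (R • (θ : EuclideanSpace ℝ (Fin n))) / R) ^ 2 := by
      have hsm : Continuous fun θ : sphere (0 : EuclideanSpace ℝ (Fin n)) 1 => R • (θ : EuclideanSpace ℝ (Fin n)) :=
        continuous_subtype_val.const_smul R
      have hg : Continuous fun θ : sphere (0 : EuclideanSpace ℝ (Fin n)) 1 => gradient u (R • (θ : EuclideanSpace ℝ (Fin n))) :=
        hgradcont.comp_continuous hsm fun θ => hball R hR θ
      have hucont : Continuous fun θ : sphere (0 : EuclideanSpace ℝ (Fin n)) 1 => u (R • (θ : EuclideanSpace ℝ (Fin n))) :=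
        (hu.continuousOn).comp_continuous hsm fun θ => hball R hR θ
      exact ((hg.inner continuous_subtype_val).sub
        ((continuous_const.mul hucont).div_const R)).pow 2
    have := sphInt_eq_zero_of hn _ hcont (fun θ => sq_nonneg _) hI0
    intro θ
    have h2 := this θ
    have := pow_eq_zero_iff (n := 2) (by norm_num) |>.mp h2
    linarith [sub_eq_zero.mp this]
  -- Step 4–6: integrate along rays.
  intro x t ht hax hxb hatx htxb
  have hxpos : 0 < ‖x‖ := lt_of_le_of_lt ha hax
  set θ₀ : EuclideanSpace ℝ (Fin n) := ‖x‖⁻¹ • x with hθ₀def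
  have hθ₀ : ‖θ₀‖ = 1 := by
    rw [hθ₀def, norm_smul, norm_inv, norm_norm, inv_mul_cancel₀ hxpos.ne']
  have hθ₀s : θ₀ ∈ sphere (0 : EuclideanSpace ℝ (Fin n)) 1 := mem_sphere_zero_iff_norm.mpr hθ₀
  set g : ℝ → ℝ := fun r => u (r • θ₀) / r ^ α with hgdef
  have hgderiv : ∀ r ∈ Set.Ioo a b, HasDerivAt g 0 r := by
    intro r hr
    have hrpos : 0 < r := lt_of_le_of_lt ha hr.1
    have hy : r • θ₀ ∈ ball (0 : EuclideanSpace ℝ (Fin n)) R₀ := hball r hr ⟨θ₀, hθ₀s⟩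
    have hud : DifferentiableAt ℝ u (r • θ₀) :=
      (hu.differentiableOn one_ne_zero).differentiableAt (isOpen_ball.mem_nhds hy)
    have h1 : HasDerivAt (fun s : ℝ => s • θ₀) θ₀ r := by
      simpa using (hasDerivAt_id r).smul_const θ₀
    have hφ : HasDerivAt (fun s : ℝ => u (s • θ₀)) (fderiv ℝ u (r • θ₀) θ₀) r :=
      hud.hasFDerivAt.comp_hasDerivAt r h1
    have hig : (⟪gradient u (r • θ₀), θ₀⟫ : ℝ) = fderiv ℝ u (r • θ₀) θ₀ :=
      InnerProductSpace.toDual_symm_apply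
    have hφ' : HasDerivAt (fun s : ℝ => u (s • θ₀)) (α * u (r • θ₀) / r) r := by
      rw [← key r hr ⟨θ₀, hθ₀s⟩, hig]; exact hφ
    have hrpow : HasDerivAt (fun s : ℝ => s ^ α) (α * r ^ (α - 1)) r :=
      Real.hasDerivAt_rpow_const (Or.inl hrpos.ne')
    have hne : r ^ α ≠ 0 := (Real.rpow_pos_of_pos hrpos α).ne'
    have hdiv := hφ'.div hrpow hne
    have hnum : (α * u (r • θ₀) / r * r ^ α - u (r • θ₀) * (α * r ^ (α - 1))) /
        (r ^ α) ^ 2 = 0 := by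
      have hsub : r ^ (α - 1) = r ^ α / r := Real.rpow_sub_one hrpos.ne' α
      rw [hsub]
      field_simp
      ring
    rw [hnum] at hdiv
    exact hdiv
  have hgconst : ∀ s₁ ∈ Set.Ioo a b, ∀ s₂ ∈ Set.Ioo a b, g s₂ = g s₁ := by
    have main : ∀ p q : ℝ, p ∈ Set.Ioo a b → q ∈ Set.Ioo a b → p ≤ q → g q = g p := by
      intro p q hp hq hpq
      have hsub : Icc p q ⊆ Set.Ioo a b := fun z hz =>
        ⟨lt_of_lt_of_le hp.1 hz.1, lt_of_le_of_lt hz.2 hq.2⟩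
      have hc : ContinuousOn g (Icc p q) := fun z hz =>
        ((hgderiv z (hsub hz)).continuousAt).continuousWithinAt
      exact constant_of_has_deriv_right_zero hc (fun z hz =>
        (hgderiv z (hsub ⟨hz.1, hz.2.le⟩)).hasDerivWithinAt) q (right_mem_Icc.2 hpq)
    intro s₁ h₁ s₂ h₂
    rcases le_total s₁ s₂ with h | h
    · exact main s₁ s₂ h₁ h₂ h
    · exact (main s₂ s₁ h₂ h₁ h).symm
  have hxθ : x = ‖x‖ • θ₀ := by
    rw [hθ₀def, smul_inv_smul₀ hxpos.ne']
  have htx : t • x = (t * ‖x‖) • θ₀ := by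
    rw [hxθ]; rw [smul_smul]; rw [← hxθ]
  have hntx : ‖t • x‖ = t * ‖x‖ := by
    rw [norm_smul, Real.norm_eq_abs, abs_of_pos ht]
  have h1m : ‖x‖ ∈ Set.Ioo a b := ⟨hax, hxb⟩
  have h2m : t * ‖x‖ ∈ Set.Ioo a b := by rw [← hntx]; exact ⟨hatx, htxb⟩
  have heq := hgconst (‖x‖) h1m (t * ‖x‖) h2m
  rw [hgdef] at heq
  simp only at heq
  rw [← htx, ← hxθ] at heq
  have htxpos : 0 < t * ‖x‖ := mul_pos ht hxpos
  have hpow : (t * ‖x‖ : ℝ) ^ α = t ^ α * ‖x‖ ^ α := Real.mul_rpow ht.le (norm_nonneg x)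
  have hxα : (0:ℝ) < ‖x‖ ^ α := Real.rpow_pos_of_pos hxpos α
  have htα : (0:ℝ) < t ^ α := Real.rpow_pos_of_pos ht α
  field_simp at heq
  rw [hpow] at heq
  have heq2 : u (t • x) * ‖x‖ ^ α = (t ^ α * u x) * ‖x‖ ^ α := by rw [heq]; ring
  exact mul_right_cancel₀ hxα.ne' heq2
end
end

section
/- Let n ≥ 2, α > 0, R > 0, and let u : ℝⁿ → ℝ be continuously differentiable in a neighborhood of the sphere ∂B_R. Define w_R(x) = (|x|/R)^α u(R x/|x|) for x ≠ 0. Then for every x with 0 < |x| < R, w_R is differentiable at x and its gradient satisfies the pointwise identity |∇w_R(x)|² = (|x|/R)^{2(α−1)} [ α² u(y)²/R² + |∇u(y)|² − (∇u(y)·(x/|x|))² ], where y = R x/|x|. -/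
open MeasureTheory Metric Set Filter
open scoped RealInnerProductSpace Topology Classical

noncomputable section

section AuxGrad
variable {F : Type*} [NormedAddCommGroup F] [InnerProductSpace ℝ F]

lemma hasFDerivAt_norm_aux {x : F} (hx : x ≠ 0) :
    HasFDerivAt (fun y : F => ‖y‖) (innerSL ℝ ((‖x‖)⁻¹ • x)) x := by
  have hx' : ‖x‖ ≠ 0 := norm_ne_zero_iff.2 hx
  have h0 : ‖x‖ ^ 2 ≠ 0 := pow_ne_zero _ hx'
  have h1 : HasFDerivAt (fun y : F => ‖y‖ ^ 2) (2 • innerSL ℝ x) x :=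
    (hasStrictFDerivAt_norm_sq x).hasFDerivAt
  have h2 := h1.sqrt h0
  have heq : (fun y : F => Real.sqrt (‖y‖ ^ 2)) = fun y : F => ‖y‖ := by
    funext y; exact Real.sqrt_sq (norm_nonneg y)
  rw [heq] at h2
  refine h2.congr_fderiv ?_
  ext v
  simp only [innerSL_apply_apply, ContinuousLinearMap.smul_apply, two_smul,
    ContinuousLinearMap.add_apply, real_inner_smul_left,
    Real.sqrt_sq (norm_nonneg x), smul_eq_mul]
  field_simp; ring

lemma norm_comb_sq (e gg : F) (he : ‖e‖ = 1) (a b : ℝ) :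
    ‖(a - b * ⟪gg, e⟫) • e + b • gg‖ ^ 2 = a ^ 2 + b ^ 2 * (‖gg‖ ^ 2 - ⟪gg, e⟫ ^ 2) := by
  rw [← real_inner_self_eq_norm_sq]
  simp only [inner_add_left, inner_add_right, real_inner_smul_left, real_inner_smul_right]
  rw [real_inner_self_eq_norm_sq e, real_inner_self_eq_norm_sq gg, he, real_inner_comm e gg]
  ring

end AuxGrad

/-- pointwise gradient identity for the α-homogeneous extension. -/
theorem gradient_homExt_sq {n : ℕ} (hn : 2 ≤ n) {α R : ℝ} (hα : 0 < α) (hR : 0 < R)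
    (u : EuclideanSpace ℝ (Fin n) → ℝ)
    (hu : ∃ V : Set (EuclideanSpace ℝ (Fin n)), IsOpen V ∧
      sphere (0 : EuclideanSpace ℝ (Fin n)) R ⊆ V ∧ ContDiffOn ℝ 1 u V) :
    ∀ x : EuclideanSpace ℝ (Fin n), 0 < ‖x‖ → ‖x‖ < R →
      DifferentiableAt ℝ (homExt n α R u) x ∧
      ‖gradient (homExt n α R u) x‖ ^ 2 =
        (‖x‖ / R) ^ (2 * (α - 1)) *
          (α ^ 2 * u ((R / ‖x‖) • x) ^ 2 / R ^ 2 + ‖gradient u ((R / ‖x‖) • x)‖ ^ 2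
            - ⟪gradient u ((R / ‖x‖) • x), ‖x‖⁻¹ • x⟫ ^ 2) := by
  obtain ⟨V, hVo, hVs, hVu⟩ := hu
  intro x hx0 hxR
  have hx : x ≠ 0 := by simpa [norm_pos_iff] using hx0
  have hrne : ‖x‖ ≠ 0 := ne_of_gt hx0
  have hRne : R ≠ 0 := ne_of_gt hR
  have hdpos : 0 < ‖x‖ / R := div_pos hx0 hR
  have hdne : ‖x‖ / R ≠ 0 := ne_of_gt hdpos
  set y : EuclideanSpace ℝ (Fin n) := (R / ‖x‖) • x with hy
  have hyn : ‖y‖ = R := by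
    rw [hy, norm_smul, Real.norm_eq_abs, abs_of_pos (div_pos hR hx0)]
    field_simp
  have hyV : y ∈ V := hVs (by simp [mem_sphere_zero_iff_norm, hyn])
  have hud : DifferentiableAt ℝ u y :=
    (hVu.differentiableOn one_ne_zero).differentiableAt (hVo.mem_nhds hyV)
  set g : EuclideanSpace ℝ (Fin n) := gradient u y with hg
  have hgu : HasFDerivAt u (InnerProductSpace.toDual ℝ _ g) y :=
    hud.hasGradientAt.hasFDerivAt
  have hxy : (R * (‖x‖)⁻¹) • x = y := by rw [hy, div_eq_mul_inv]
  -- derivative pieces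
  have hnorm := hasFDerivAt_norm_aux hx
  have hinv : HasFDerivAt (fun z : EuclideanSpace ℝ (Fin n) => (‖z‖)⁻¹)
      ((-((‖x‖ : ℝ) ^ 2)⁻¹) • innerSL ℝ ((‖x‖)⁻¹ • x)) x := by
    have := (hasDerivAt_inv hrne).comp_hasFDerivAt x hnorm
    simpa [Function.comp_def] using this
  have hsm := (((hasFDerivAt_const R x).mul hinv).smul (hasFDerivAt_id x))
  simp only [id_eq, smul_zero, zero_smul, add_zero] at hsm
  have hgu' : HasFDerivAt u (InnerProductSpace.toDual ℝ _ g) ((R * (‖x‖)⁻¹) • x) := by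
    rw [hxy]; exact hgu
  have hcomp := HasFDerivAt.comp (g := u)
      (f := fun z : EuclideanSpace ℝ (Fin n) => (R * (‖z‖)⁻¹) • z) x hgu' hsm
  simp only [Function.comp_def] at hcomp
  have hφ : HasFDerivAt (fun z : EuclideanSpace ℝ (Fin n) => (‖z‖ / R) ^ α)
      ((α * (‖x‖ / R) ^ (α - 1)) • ((R : ℝ)⁻¹ • innerSL ℝ ((‖x‖)⁻¹ • x))) x := by
    have hb : HasFDerivAt (fun z : EuclideanSpace ℝ (Fin n) => ‖z‖ / R)
        ((R : ℝ)⁻¹ • innerSL ℝ ((‖x‖)⁻¹ • x)) x := by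
      have := hnorm.const_smul (R : ℝ)⁻¹
      simpa [div_eq_mul_inv, mul_comm, Pi.smul_def, smul_eq_mul] using this
    have hr := (Real.hasDerivAt_rpow_const (x := ‖x‖ / R) (p := α)
      (Or.inl hdne)).comp_hasFDerivAt x hb
    simpa [Function.comp_def] using hr
  have hmul := hφ.mul hcomp
  have hwf := hmul.congr_of_eventuallyEq (f₁ := homExt n α R u) ?hev
  case hev =>
    filter_upwards [isOpen_compl_singleton.mem_nhds hx] with z hz
    have hz' : z ≠ 0 := hz
    simp [homExt, hz', div_eq_mul_inv]
  have hαB : (‖x‖ / R) ^ α = (‖x‖ / R) ^ (α - 1) * (‖x‖ / R) := by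
    nth_rewrite 1 [show α = (α - 1) + 1 by ring]
    rw [Real.rpow_add_one hdne]
  have hgrad : HasGradientAt (homExt n α R u)
      ((α * u y * (‖x‖ / R) ^ (α - 1) / R
          - (‖x‖ / R) ^ (α - 1) * ⟪g, (‖x‖)⁻¹ • x⟫) • ((‖x‖)⁻¹ • x)
        + (‖x‖ / R) ^ (α - 1) • g) x := by
    rw [hasGradientAt_iff_hasFDerivAt]
    refine hwf.congr_fderiv ?_
    ext v
    simp only [ContinuousLinearMap.add_apply, ContinuousLinearMap.smul_apply,
      ContinuousLinearMap.comp_apply, ContinuousLinearMap.smulRight_apply,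
      ContinuousLinearMap.coe_id', id_eq, innerSL_apply_apply, smul_eq_mul,
      InnerProductSpace.toDual_apply_apply, inner_add_left, inner_add_right,
      real_inner_smul_left, real_inner_smul_right, hxy, neg_mul, neg_smul,
      ContinuousLinearMap.neg_apply, hαB, Pi.mul_apply]
    rw [real_inner_comm x g]
    field_simp
    ring
  refine ⟨hwf.differentiableAt, ?_⟩
  rw [hgrad.gradient]
  have hB2 : (‖x‖ / R) ^ (2 * (α - 1)) = ((‖x‖ / R) ^ (α - 1)) ^ 2 := by
    rw [mul_comm (2 : ℝ), Real.rpow_mul (le_of_lt hdpos),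
      show ((2 : ℝ)) = ((2 : ℕ) : ℝ) by norm_num, Real.rpow_natCast]
  rw [hB2]
  have he1 : ‖(‖x‖)⁻¹ • x‖ = 1 := by
    rw [norm_smul, Real.norm_eq_abs, abs_of_pos (inv_pos.2 hx0), inv_mul_cancel₀ hrne]
  rw [norm_comb_sq _ g he1 (α * u y * (‖x‖ / R) ^ (α - 1) / R) ((‖x‖ / R) ^ (α - 1))]
  field_simp
  ring
end
end

section
/- Let n ≥ 2, α > 1, R > 0, and let u : ℝⁿ → ℝ be continuously differentiable in a neighborhood of the closed ball of radius R centered at the origin. Define w_R(x) = (|x|/R)^α u(R x/|x|) for x ≠ 0 and w_R(0) = 0. Then the Dirichlet energy of w_R on B_R satisfies ∫_{B_R} |∇w_R|² dx = (R^n / (n + 2(α−1))) · ∫_{S^{n-1}} [ α² u(Rθ)²/R² + |∇u(Rθ)|² − (∇u(Rθ)·θ)² ] dθ. -/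
/-! On the ray through a unit vector `θ`, the gradient of `w_R` at `r • θ` is `(r / R) ^ (α - 1)`
times `(α u(Rθ) / R) θ + (∇u(Rθ) - ⟪∇u(Rθ), θ⟫ θ)`, a sum of two orthogonal vectors. So `|∇w_R|²`
separates in polar coordinates into the angular integrand times `(r / R) ^ (2 (α - 1))`, and
`∫₀ᴿ r ^ (n - 1) (r / R) ^ (2 (α - 1)) dr = R ^ n / (n + 2 (α - 1))`. -/

open MeasureTheory Metric Set Filter
open scoped RealInnerProductSpace Topology Classical

noncomputable section


variable {G : Type*} [NormedAddCommGroup G] [NormedSpace ℝ G]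

theorem integral_volumeIoiPow (m : ℕ) (f : ℝ → G) :
    ∫ t : Ioi (0 : ℝ), f t ∂.volumeIoiPow m = ∫ r in Ioi 0, r ^ m • f r := by
  simp only [Measure.volumeIoiPow, ENNReal.ofReal]
  rw [integral_withDensity_eq_integral_smul (measurable_subtype_coe.pow_const _).real_toNNReal,
    integral_subtype_comap measurableSet_Ioi fun r ↦ Real.toNNReal (r ^ m) • f r]
  refine setIntegral_congr_fun measurableSet_Ioi fun r hr ↦ ?_
  rw [NNReal.smul_def, Real.coe_toNNReal _ (pow_nonneg hr.out.le _)]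

theorem integral_pow_mul_div_rpow {R s : ℝ} (hR : 0 < R) (m : ℕ) (hs : -1 < (m : ℝ) + s) :
    ∫ r in 0..R, r ^ m * (r / R) ^ s = R ^ ((m : ℝ) + 1) / ((m : ℝ) + 1 + s) := by
  have hpow : ∀ r ∈ uIoc 0 R, r ^ m * (r / R) ^ s = r ^ ((m : ℝ) + s) / R ^ s := by
    intro r hr
    rw [uIoc_of_le hR.le] at hr
    rw [Real.div_rpow hr.1.le hR.le, Real.rpow_add hr.1, Real.rpow_natCast, mul_div_assoc]
  rw [intervalIntegral.integral_congr_ae (.of_forall hpow), intervalIntegral.integral_div,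
    integral_rpow (.inl hs), Real.zero_rpow (by linarith), sub_zero,
    show (m : ℝ) + s + 1 = (m + 1) + s by ring, Real.rpow_add hR]
  have : (0 : ℝ) < R ^ s := Real.rpow_pos_of_pos hR s
  field_simp

section Polar

variable {E : Type*} [NormedAddCommGroup E] [NormedSpace ℝ E] [FiniteDimensional ℝ E]
  [Nontrivial E] [MeasurableSpace E] [BorelSpace E] (μ : Measure E) [μ.IsAddHaarMeasure]

theorem integral_eq_integral_sphere_prod_Ioi (F : E → G) :
    ∫ x, F x ∂μ = ∫ p : sphere (0 : E) 1 × Ioi (0 : ℝ), F (p.2.1 • p.1.1)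
      ∂μ.toSphere.prod (.volumeIoiPow (Module.finrank ℝ E - 1)) := by
  calc ∫ x, F x ∂μ = ∫ x : ({0}ᶜ : Set E), F x ∂μ.comap (↑) := by
        rw [integral_subtype_comap (measurableSet_singleton _).compl, restrict_compl_singleton]
    _ = _ := by
        rw [← μ.measurePreserving_homeomorphUnitSphereProd.integral_comp
          (Homeomorph.measurableEmbedding _)]
        congr 1 with x
        simp [smul_inv_smul₀ (norm_ne_zero_iff.2 x.2)]

theorem integral_ball_eq_integral_sphere_mul_integral_radial {F g : E → ℝ} {f : ℝ → ℝ} {R : ℝ}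
    (hR : 0 ≤ R) (hF : ∀ θ ∈ sphere (0 : E) 1, ∀ r ∈ Ioo 0 R, F (r • θ) = g θ * f r) :
    ∫ x in ball (0 : E) R, F x ∂μ =
      (∫ θ : sphere (0 : E) 1, g θ ∂μ.toSphere) *
        ∫ r in 0..R, r ^ (Module.finrank ℝ E - 1) * f r := by
  have hsep : ∀ p : sphere (0 : E) 1 × Ioi (0 : ℝ),
      (ball 0 R).indicator F (p.2.1 • p.1.1) = g p.1 * (Ioo 0 R).indicator f p.2 := by
    rintro ⟨⟨θ, hθ⟩, ⟨r, hr⟩⟩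
    rw [mem_Ioi] at hr
    have hnorm : ‖r • θ‖ = r := by
      rw [norm_smul, mem_sphere_zero_iff_norm.1 hθ, mul_one, Real.norm_of_nonneg hr.le]
    by_cases hrR : r < R
    · rw [indicator_of_mem (by simpa [hnorm] using hrR),
        indicator_of_mem (show r ∈ Ioo 0 R from ⟨hr, hrR⟩), hF θ hθ r ⟨hr, hrR⟩]
    · rw [indicator_of_notMem (by simpa [hnorm] using hrR),
        indicator_of_notMem fun h ↦ hrR h.2, mul_zero]
  rw [← integral_indicator measurableSet_ball, integral_eq_integral_sphere_prod_Ioi,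
    integral_congr_ae (.of_forall hsep),
    integral_prod_mul (fun θ : sphere (0 : E) 1 ↦ g θ)
      fun r : Ioi (0 : ℝ) ↦ (Ioo 0 R).indicator f r,
    integral_volumeIoiPow, intervalIntegral.integral_of_le hR, integral_Ioc_eq_integral_Ioo]
  simp_rw [smul_eq_mul,
    ← indicator_mul_right (Ioo 0 R) (fun r : ℝ ↦ r ^ (Module.finrank ℝ E - 1)) f]
  rw [setIntegral_indicator measurableSet_Ioo, inter_eq_right.2 Ioo_subset_Ioi_self]

end Polar

section Calculus

variable {E : Type*} [NormedAddCommGroup E] [InnerProductSpace ℝ E] {x : E}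

theorem hasFDerivAt_norm_of_ne_zero (hx : x ≠ 0) :
    HasFDerivAt (‖·‖) (innerSL ℝ (‖x‖⁻¹ • x)) x := by
  have h := (hasStrictFDerivAt_norm_sq x).hasFDerivAt.sqrt (by positivity)
  simp only [Real.sqrt_sq (norm_nonneg _)] at h
  refine h.congr_fderiv ?_
  ext v
  simp only [smul_apply, innerSL_apply_apply, real_inner_smul_left,
    smul_eq_mul, nsmul_eq_mul, Nat.cast_ofNat]
  field_simp

theorem hasFDerivAt_div_norm_smul (R : ℝ) (hx : x ≠ 0) :
    HasFDerivAt (fun y : E ↦ (R / ‖y‖) • y)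
      ((R / ‖x‖) • (ContinuousLinearMap.id ℝ E -
        (innerSL ℝ (‖x‖⁻¹ • x)).smulRight (‖x‖⁻¹ • x))) x := by
  have h := (((hasDerivAt_const ‖x‖ R).div (hasDerivAt_id ‖x‖)
    (norm_ne_zero_iff.2 hx)).comp_hasFDerivAt x (hasFDerivAt_norm_of_ne_zero hx)).smul
    (hasFDerivAt_id x)
  refine h.congr_fderiv ?_
  ext v
  simp only [smul_apply, innerSL_apply_apply, real_inner_smul_left, smul_eq_mul, sub_apply,
    add_apply, ContinuousLinearMap.smulRight_apply, ContinuousLinearMap.id_apply, id,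
    Function.comp_apply, Pi.div_apply]
  module

theorem norm_smul_add_sub_inner_smul_sq {θ : E} (hθ : ‖θ‖ = 1) (a : ℝ) (g : E) :
    ‖a • θ + (g - ⟪g, θ⟫ • θ)‖ ^ 2 = a ^ 2 + ‖g‖ ^ 2 - ⟪g, θ⟫ ^ 2 := by
  rw [norm_add_sq_real, norm_sub_sq_real]
  simp only [norm_smul, Real.norm_eq_abs, hθ, mul_one, sq_abs, real_inner_comm, inner_sub_right,
    real_inner_smul_right, real_inner_self_eq_norm_sq, one_pow]
  ring

variable [CompleteSpace E]

theorem HasGradientAt.mul {f g : E → ℝ} {a b : E} (hf : HasGradientAt f a x)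
    (hg : HasGradientAt g b x) : HasGradientAt (fun y ↦ f y * g y) (f x • b + g x • a) x := by
  rw [hasGradientAt_iff_hasFDerivAt] at *
  refine (hf.mul hg).congr_fderiv ?_
  ext v
  simp only [InnerProductSpace.toDual_apply_apply, add_apply, smul_apply, inner_add_left,
    real_inner_smul_left, smul_eq_mul]

theorem HasGradientAt.comp_div_norm_smul {u : E → ℝ} {g : E} {R : ℝ} (hx : x ≠ 0)
    (hu : HasGradientAt u g ((R / ‖x‖) • x)) :
    HasGradientAt (fun y ↦ u ((R / ‖y‖) • y))
      ((R / ‖x‖) • (g - ⟪g, ‖x‖⁻¹ • x⟫ • (‖x‖⁻¹ • x))) x := by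
  rw [hasGradientAt_iff_hasFDerivAt] at *
  refine (HasFDerivAt.comp (f := fun y : E ↦ (R / ‖y‖) • y) x hu
    (hasFDerivAt_div_norm_smul R hx)).congr_fderiv ?_
  ext v
  simp only [InnerProductSpace.toDual_apply_apply, ContinuousLinearMap.comp_apply, smul_apply,
    sub_apply, ContinuousLinearMap.smulRight_apply, ContinuousLinearMap.id_apply,
    innerSL_apply_apply, real_inner_smul_left, real_inner_smul_right, inner_sub_left,
    inner_sub_right, real_inner_comm x]
  ring

theorem hasGradientAt_norm_div_rpow {R : ℝ} (α : ℝ) (hR : R ≠ 0) (hx : x ≠ 0) :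
    HasGradientAt (fun y : E ↦ (‖y‖ / R) ^ α)
      ((α / R * (‖x‖ / R) ^ (α - 1)) • (‖x‖⁻¹ • x)) x := by
  have h := (((hasDerivAt_id ‖x‖).div_const R).rpow_const (p := α)
    (.inl (div_ne_zero (norm_ne_zero_iff.2 hx) hR))).comp_hasFDerivAt x
    (hasFDerivAt_norm_of_ne_zero hx)
  rw [hasGradientAt_iff_hasFDerivAt]
  refine h.congr_fderiv ?_
  ext v
  simp only [smul_apply, innerSL_apply_apply, real_inner_smul_left,
    smul_eq_mul, InnerProductSpace.toDual_apply_apply, id]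
  ring

end Calculus

section HomogeneousExtension

variable {n : ℕ} {α R r : ℝ} {u : EuclideanSpace ℝ (Fin n) → ℝ}
  {θ : EuclideanSpace ℝ (Fin n)}

theorem hasGradientAt_homExt {g : EuclideanSpace ℝ (Fin n)} (hR : 0 < R) (hθ : ‖θ‖ = 1)
    (hr : 0 < r) (hu : HasGradientAt u g (R • θ)) :
    HasGradientAt (homExt n α R u)
      ((r / R) ^ (α - 1) • ((α / R * u (R • θ)) • θ + (g - ⟪g, θ⟫ • θ)))
      (r • θ) := by
  have hnorm : ‖r • θ‖ = r := by rw [norm_smul, hθ, mul_one, Real.norm_of_nonneg hr.le]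
  have hx : r • θ ≠ 0 := norm_pos_iff.1 (by rw [hnorm]; exact hr)
  have hunit : ‖r • θ‖⁻¹ • (r • θ) = θ := by
    rw [hnorm, smul_smul, inv_mul_cancel₀ hr.ne', one_smul]
  have hproj : (R / ‖r • θ‖) • (r • θ) = R • θ := by
    rw [hnorm, smul_smul, div_mul_cancel₀ _ hr.ne']
  have hprod := (hasGradientAt_norm_div_rpow α hR.ne' hx).mul
    (HasGradientAt.comp_div_norm_smul (u := u) hx (hproj ▸ hu))
  rw [hunit, hproj, hnorm] at hprod
  have heq :
      homExt n α R u =ᶠ[𝓝 (r • θ)] fun y ↦ (‖y‖ / R) ^ α * u ((R / ‖y‖) • y) :=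
    eventuallyEq_of_mem (isOpen_compl_singleton.mem_nhds hx) fun y hy ↦ if_neg hy
  convert hprod.congr_of_eventuallyEq heq using 1
  have hscale : (r / R) ^ α * (R / r) = (r / R) ^ (α - 1) := by
    rw [Real.rpow_sub_one (by positivity)]
    field_simp
  rw [smul_smul, hscale]
  module

theorem norm_gradient_homExt_sq (hR : 0 < R) (hθ : ‖θ‖ = 1) (hr : 0 < r)
    (hu : DifferentiableAt ℝ u (R • θ)) :
    ‖gradient (homExt n α R u) (r • θ)‖ ^ 2 =
      (α ^ 2 * u (R • θ) ^ 2 / R ^ 2 + ‖gradient u (R • θ)‖ ^ 2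
        - ⟪gradient u (R • θ), θ⟫ ^ 2) * (r / R) ^ (2 * (α - 1)) := by
  rw [(hasGradientAt_homExt hR hθ hr hu.hasGradientAt).gradient, norm_smul, mul_pow,
    norm_smul_add_sub_inner_smul_sq hθ, Real.norm_eq_abs, sq_abs, ← Real.rpow_natCast,
    ← Real.rpow_mul (by positivity)]
  push_cast
  ring_nf

end HomogeneousExtension

/-- Dirichlet energy of the α-homogeneous extension on `B_R`. -/
theorem energy_homExt {n : ℕ} (hn : 2 ≤ n) {α R : ℝ} (hα : 1 < α) (hR : 0 < R)
    (u : EuclideanSpace ℝ (Fin n) → ℝ)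
    (hu : ∃ V : Set (EuclideanSpace ℝ (Fin n)), IsOpen V ∧
      closedBall (0 : EuclideanSpace ℝ (Fin n)) R ⊆ V ∧ ContDiffOn ℝ 1 u V) :
    (∫ x in ball (0 : EuclideanSpace ℝ (Fin n)) R, ‖gradient (homExt n α R u) x‖ ^ 2) =
      R ^ (n : ℝ) / ((n : ℝ) + 2 * (α - 1)) *
        sphInt n (fun θ =>
          α ^ 2 * u (R • θ) ^ 2 / R ^ 2 + ‖gradient u (R • θ)‖ ^ 2
            - ⟪gradient u (R • θ), θ⟫ ^ 2) := by
  obtain ⟨V, hV, hBV, huV⟩ := hu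
  have : Nonempty (Fin n) := ⟨⟨0, by omega⟩⟩
  have hdiff :
      ∀ θ ∈ sphere (0 : EuclideanSpace ℝ (Fin n)) 1, DifferentiableAt ℝ u (R • θ) := by
    intro θ hθ
    have hRθ : R • θ ∈ closedBall 0 R := by
      rw [mem_closedBall_zero_iff, norm_smul, mem_sphere_zero_iff_norm.1 hθ, mul_one,
        Real.norm_of_nonneg hR.le]
    exact (huV.contDiffAt (hV.mem_nhds (hBV hRθ))).differentiableAt one_ne_zero
  rw [integral_ball_eq_integral_sphere_mul_integral_radial volume hR.le fun θ hθ r hr ↦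
      norm_gradient_homExt_sq hR (mem_sphere_zero_iff_norm.1 hθ) hr.1 (hdiff θ hθ),
    finrank_euclideanSpace_fin, integral_pow_mul_div_rpow hR _ (by linarith),
    Nat.cast_sub (by omega), Nat.cast_one, sub_add_cancel, mul_comm]
  rfl
end
end

section
/- Let n ≥ 2, α > 1, R > 0, and let u : ℝⁿ → ℝ be continuously differentiable in a neighborhood of the closed ball of radius R centered at the origin. Define w_R(x) = (|x|/R)^α u(R x/|x|) for x ≠ 0, w_R(0) = 0, and suppose ∫_{B_R} |∇u|² dx ≤ ∫_{B_R} |∇w_R|² dx. Then ∫_{∂B_R} [ (∇u·ν)² − α² u²/R² ] dσ ≤ ∫_{∂B_R} |∇u|² dσ − ((n + 2(α−1))/R) ∫_{B_R} |∇u|² dx, where ν = x/|x| is the outward unit normal to ∂B_R and dσ is the surface measure on ∂B_R. -/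
open MeasureTheory Metric Set Filter
open scoped RealInnerProductSpace Topology Classical

noncomputable section

/-- Surface integral over the sphere `∂B_R` with its surface measure `dσ`,
obtained by scaling the unit-sphere surface measure by `R^{n-1}`. -/
def sphereIntR (n : ℕ) (R : ℝ) (f : EuclideanSpace ℝ (Fin n) → ℝ) : ℝ :=
  R ^ ((n : ℝ) - 1) * sphInt n (fun θ => f (R • θ))

section Aux

variable {E : Type*} [NormedAddCommGroup E] [InnerProductSpace ℝ E]

lemma aux_hasFDerivAt_norm' {x : E} (hx : x ≠ 0) :
    HasFDerivAt (fun z : E => ‖z‖) (innerSL ℝ ((‖x‖⁻¹ : ℝ) • x)) x := by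
  have hr : (0:ℝ) < ‖x‖ := norm_pos_iff.2 hx
  have h1 : HasFDerivAt (fun z : E => ⟪z, z⟫) (innerSL ℝ x + innerSL ℝ x) x := by
    have := (hasFDerivAt_id x).inner ℝ (hasFDerivAt_id x)
    refine this.congr_fderiv ?_
    ext v
    simp [real_inner_comm]
  have h2 : HasDerivAt Real.sqrt (1 / (2 * Real.sqrt (⟪x, x⟫))) (⟪x, x⟫) := by
    apply Real.hasDerivAt_sqrt
    simpa [real_inner_self_eq_norm_sq] using (pow_pos hr 2).ne'
  have h3 := h2.comp_hasFDerivAt (f := fun z : E => ⟪z, z⟫) x h1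
  have hsq : Real.sqrt ⟪x, x⟫ = ‖x‖ := by
    rw [real_inner_self_eq_norm_sq]
    exact Real.sqrt_sq (norm_nonneg x)
  have heq : (Real.sqrt ∘ fun z : E => ⟪z, z⟫) = fun z : E => ‖z‖ := by
    funext z
    simp only [Function.comp]
    rw [real_inner_self_eq_norm_sq]
    exact Real.sqrt_sq (norm_nonneg z)
  rw [heq] at h3
  refine h3.congr_fderiv ?_
  ext v
  simp only [ContinuousLinearMap.coe_smul', Pi.smul_apply, innerSL_apply_apply,
    ContinuousLinearMap.add_apply, hsq]
  rw [real_inner_smul_left]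
  rw [smul_eq_mul]
  field_simp
  ring

lemma aux_norm_sq_formula {θ G : E} (hθ : ‖θ‖ = 1) (q a : ℝ) :
    ‖q • (a • θ + (G - ⟪G, θ⟫ • θ))‖ ^ 2 = q ^ 2 * (a ^ 2 + (‖G‖ ^ 2 - ⟪G, θ⟫ ^ 2)) := by
  rw [norm_smul, mul_pow, Real.norm_eq_abs, sq_abs]
  congr 1
  rw [← real_inner_self_eq_norm_sq]
  simp only [inner_add_left, inner_add_right, inner_sub_left, inner_sub_right,
    real_inner_smul_left, real_inner_smul_right, real_inner_self_eq_norm_sq, hθ,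
    real_inner_comm θ G, norm_smul, mul_pow, Real.norm_eq_abs, sq_abs]
  ring

variable [CompleteSpace E]

lemma aux_hasGradientAt_homExt {α R : ℝ} (hR : 0 < R) (u : E → ℝ) {x : E} (hx : x ≠ 0)
    (hu : DifferentiableAt ℝ u (R • ((‖x‖⁻¹ : ℝ) • x))) :
    HasGradientAt (fun z => if z = 0 then 0 else (‖z‖ / R) ^ α * u ((R / ‖z‖) • z))
      ((‖x‖ / R) ^ (α - 1) •
        (((α / R) * u (R • ((‖x‖⁻¹ : ℝ) • x))) • ((‖x‖⁻¹ : ℝ) • x) +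
          (gradient u (R • ((‖x‖⁻¹ : ℝ) • x)) -
            ⟪gradient u (R • ((‖x‖⁻¹ : ℝ) • x)), (‖x‖⁻¹ : ℝ) • x⟫ • ((‖x‖⁻¹ : ℝ) • x)))) x := by
  have hr : (0 : ℝ) < ‖x‖ := norm_pos_iff.2 hx
  set r := ‖x‖ with hrdef
  set θ : E := (r⁻¹ : ℝ) • x with hθdef
  have hxθ : x = r • θ := by
    rw [hθdef, smul_smul, mul_inv_cancel₀ hr.ne', one_smul]
  have hθnorm : ‖θ‖ = 1 := by
    rw [hθdef, norm_smul, norm_inv, norm_norm, ← hrdef, inv_mul_cancel₀ hr.ne']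
  set y := R • θ with hydef
  set G := gradient u y with hGdef
  have hrR : (0 : ℝ) < r / R := div_pos hr hR
  have hN : HasFDerivAt (fun z : E => ‖z‖) (innerSL ℝ θ) x := aux_hasFDerivAt_norm' hx
  have hdivc : HasDerivAt (fun t : ℝ => t / R) R⁻¹ r := by
    simpa using (hasDerivAt_id r).div_const R
  have hφ : HasDerivAt (fun t : ℝ => (t / R) ^ α) (α * (r / R) ^ (α - 1) * R⁻¹) r := by
    have h := (Real.hasDerivAt_rpow_const (x := r / R) (p := α) (Or.inl hrR.ne')).comp r hdivc
    exact h
  have h1 : HasFDerivAt (fun z : E => (‖z‖ / R) ^ α)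
      ((α * (r / R) ^ (α - 1) * R⁻¹) • innerSL ℝ θ) x :=
    hφ.comp_hasFDerivAt x hN
  have hc : HasDerivAt (fun t : ℝ => R / t) (-R / r ^ 2) r := by
    have := (hasDerivAt_const r R).div (hasDerivAt_id r) hr.ne'
    exact this.congr_deriv (by simp [pow_two])
  have hcF : HasFDerivAt (fun z : E => R / ‖z‖) ((-R / r ^ 2) • innerSL ℝ θ) x :=
    hc.comp_hasFDerivAt x hN
  have hm : HasFDerivAt (fun z : E => (R / ‖z‖) • z)
      ((R / r) • ContinuousLinearMap.id ℝ E + ((-R / r ^ 2) • innerSL ℝ θ).smulRight x) x := by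
    exact hcF.smul (hasFDerivAt_id x)
  have hyV : (R / ‖x‖) • x = y := by
    rw [hydef, hθdef, smul_smul, div_eq_mul_inv, hrdef]
  have huy : HasFDerivAt u (InnerProductSpace.toDual ℝ E G) y := hu.hasGradientAt
  have huy' : HasFDerivAt u (InnerProductSpace.toDual ℝ E G) ((fun z : E => (R / ‖z‖) • z) x) := by
    simpa [hyV] using huy
  have h2 : HasFDerivAt (fun z : E => u ((R / ‖z‖) • z))
      ((InnerProductSpace.toDual ℝ E G).comp
        ((R / r) • ContinuousLinearMap.id ℝ E + ((-R / r ^ 2) • innerSL ℝ θ).smulRight x)) x :=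
    HasFDerivAt.comp (g := u) x huy' hm
  have h3 := h1.mul h2
  have hval : u ((R / ‖x‖) • x) = u y := by rw [hyV]
  have hev : (fun z : E => if z = 0 then 0 else (‖z‖ / R) ^ α * u ((R / ‖z‖) • z))
      =ᶠ[𝓝 x] (fun z : E => (‖z‖ / R) ^ α * u ((R / ‖z‖) • z)) := by
    filter_upwards [isOpen_compl_singleton.mem_nhds hx] with z hz
    exact if_neg hz
  rw [hasGradientAt_iff_hasFDerivAt]
  refine (h3.congr_of_eventuallyEq hev).congr_fderiv ?_
  have hpq : (r / R) ^ α = (r / R) ^ (α - 1) * (r / R) := by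
    rw [← Real.rpow_add_one hrR.ne' (α - 1), sub_add_cancel]
  ext v
  simp only [ContinuousLinearMap.add_apply, ContinuousLinearMap.coe_smul', Pi.smul_apply,
    ContinuousLinearMap.coe_comp', Function.comp_apply, ContinuousLinearMap.smulRight_apply,
    ContinuousLinearMap.coe_id', id_eq, innerSL_apply_apply, InnerProductSpace.toDual_apply_apply,
    smul_eq_mul, inner_add_left, inner_sub_left, real_inner_smul_left, hval]
  have hxv : ⟪x, v⟫ = r * ⟪θ, v⟫ := by rw [hxθ]; exact real_inner_smul_left θ v r
  have hGx : ⟪G, x⟫ = r * ⟪G, θ⟫ := by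
    rw [hxθ, real_inner_smul_right]
  rw [inner_add_right, real_inner_smul_right, real_inner_smul_right, hGx, ← hrdef, hpq]
  field_simp
  ring

end Aux

lemma aux_polar_integral {n : ℕ} (hn : 1 ≤ n) {R β : ℝ} (hR : 0 < R) (hβ : 0 < β)
    (H : EuclideanSpace ℝ (Fin n) → ℝ) :
    (∫ x in ball (0 : EuclideanSpace ℝ (Fin n)) R, (‖x‖ / R) ^ β * H ((‖x‖⁻¹ : ℝ) • x))
      = (R ^ (n : ℝ) / ((n : ℝ) + β)) * sphInt n H := by
  haveI : Nontrivial (EuclideanSpace ℝ (Fin n)) := by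
    refine Module.nontrivial_of_finrank_pos (R := ℝ) ?_
    rw [finrank_euclideanSpace_fin]; omega
  have hdim : Module.finrank ℝ (EuclideanSpace ℝ (Fin n)) = n := finrank_euclideanSpace_fin
  set f : EuclideanSpace ℝ (Fin n) → ℝ := fun x => (‖x‖ / R) ^ β * H ((‖x‖⁻¹ : ℝ) • x) with hf
  set K : Set.Ioi (0:ℝ) → ℝ := fun r => indicator (Ioo (0:ℝ) R) (fun t => (t / R) ^ β) r.1 with hK
  set Hc : sphere (0 : EuclideanSpace ℝ (Fin n)) 1 → ℝ := fun θ => H (θ : EuclideanSpace ℝ (Fin n)) with hHc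
  have s1 : (∫ x in ball (0 : EuclideanSpace ℝ (Fin n)) R, f x)
      = ∫ x, indicator (ball (0:EuclideanSpace ℝ (Fin n)) R) f x :=
    (integral_indicator measurableSet_ball).symm
  have s2 : (∫ x, indicator (ball (0:EuclideanSpace ℝ (Fin n)) R) f x)
      = ∫ x : ({0}ᶜ : Set (EuclideanSpace ℝ (Fin n))), indicator (ball (0:EuclideanSpace ℝ (Fin n)) R) f x.1
          ∂((volume : Measure (EuclideanSpace ℝ (Fin n))).comap Subtype.val) := by
    rw [integral_subtype_comap (measurableSet_singleton (0:EuclideanSpace ℝ (Fin n))).compl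
        fun x => indicator (ball (0:EuclideanSpace ℝ (Fin n)) R) f x,
      restrict_compl_singleton]
  have s3 : (∫ x : ({0}ᶜ : Set (EuclideanSpace ℝ (Fin n))), indicator (ball (0:EuclideanSpace ℝ (Fin n)) R) f x.1
          ∂((volume : Measure (EuclideanSpace ℝ (Fin n))).comap Subtype.val))
      = ∫ p : sphere (0:EuclideanSpace ℝ (Fin n)) 1 × Set.Ioi (0:ℝ), Hc p.1 * K p.2
          ∂((volume : Measure (EuclideanSpace ℝ (Fin n))).toSphere.prod
              (.volumeIoiPow (Module.finrank ℝ (EuclideanSpace ℝ (Fin n)) - 1))) := by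
    rw [← (volume : Measure (EuclideanSpace ℝ (Fin n))).measurePreserving_homeomorphUnitSphereProd.integral_comp
        (Homeomorph.measurableEmbedding _) (fun p => Hc p.1 * K p.2)]
    refine integral_congr_ae (Eventually.of_forall fun x => ?_)
    have hx : x.1 ≠ 0 := x.2
    have hxpos : (0:ℝ) < ‖x.1‖ := norm_pos_iff.2 hx
    show indicator (ball (0:EuclideanSpace ℝ (Fin n)) R) f x.1 = Hc _ * K _
    rw [hHc, hK]
    simp only [homeomorphUnitSphereProd_apply_fst_coe, homeomorphUnitSphereProd_apply_snd_coe]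
    by_cases h : ‖x.1‖ < R
    · rw [indicator_of_mem (by rwa [mem_ball_zero_iff] : x.1 ∈ ball (0:EuclideanSpace ℝ (Fin n)) R),
        indicator_of_mem (mem_Ioo.2 ⟨hxpos, h⟩), hf, mul_comm]
    · rw [indicator_of_notMem (by rwa [mem_ball_zero_iff] : ¬ x.1 ∈ ball (0:EuclideanSpace ℝ (Fin n)) R),
        indicator_of_notMem (fun hmem => h (mem_Ioo.1 hmem).2), mul_zero]
  have s4 : (∫ p : sphere (0:EuclideanSpace ℝ (Fin n)) 1 × Set.Ioi (0:ℝ), Hc p.1 * K p.2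
          ∂((volume : Measure (EuclideanSpace ℝ (Fin n))).toSphere.prod
              (.volumeIoiPow (Module.finrank ℝ (EuclideanSpace ℝ (Fin n)) - 1))))
      = (∫ θ, Hc θ ∂(volume : Measure (EuclideanSpace ℝ (Fin n))).toSphere)
          * ∫ r, K r ∂(Measure.volumeIoiPow (Module.finrank ℝ (EuclideanSpace ℝ (Fin n)) - 1)) :=
    integral_prod_mul Hc K
  have s5 : (∫ r, K r ∂(Measure.volumeIoiPow (Module.finrank ℝ (EuclideanSpace ℝ (Fin n)) - 1)))
      = R ^ (n : ℝ) / ((n : ℝ) + β) := by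
    have hmeas : Measurable fun r : Set.Ioi (0:ℝ) =>
        Real.toNNReal (r.1 ^ (Module.finrank ℝ (EuclideanSpace ℝ (Fin n)) - 1)) :=
      (measurable_subtype_coe.pow_const _).real_toNNReal
    simp only [Measure.volumeIoiPow, ENNReal.ofReal]
    rw [integral_withDensity_eq_integral_smul hmeas K,
      integral_subtype_comap measurableSet_Ioi
        fun a : ℝ => Real.toNNReal (a ^ (Module.finrank ℝ (EuclideanSpace ℝ (Fin n)) - 1)) •
          indicator (Ioo (0:ℝ) R) (fun t => (t / R) ^ β) a]
    have congr1 : (∫ r in Ioi (0:ℝ),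
          Real.toNNReal (r ^ (Module.finrank ℝ (EuclideanSpace ℝ (Fin n)) - 1)) •
            indicator (Ioo (0:ℝ) R) (fun t => (t / R) ^ β) r)
        = ∫ r in Ioi (0:ℝ),
            indicator (Ioo (0:ℝ) R) (fun t => t ^ (n - 1) * (t / R) ^ β) r := by
      refine setIntegral_congr_fun measurableSet_Ioi fun r hr => ?_
      have hr0 : (0:ℝ) ≤ r := le_of_lt hr
      by_cases h : r ∈ Ioo (0:ℝ) R
      · rw [indicator_of_mem h, indicator_of_mem h, NNReal.smul_def,
          Real.coe_toNNReal _ (pow_nonneg hr0 _), hdim, smul_eq_mul]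
      · rw [indicator_of_notMem h, indicator_of_notMem h, smul_zero]
    rw [congr1, setIntegral_indicator measurableSet_Ioo,
      inter_eq_right.2 Ioo_subset_Ioi_self,
      setIntegral_congr_set Ioo_ae_eq_Ioc, ← intervalIntegral.integral_of_le hR.le]
    have congr2 : (∫ t in (0:ℝ)..R, t ^ (n - 1) * (t / R) ^ β)
        = ∫ t in (0:ℝ)..R, t ^ ((n : ℝ) - 1 + β) / R ^ β := by
      refine intervalIntegral.integral_congr fun t ht => ?_
      rw [uIcc_of_le hR.le] at ht
      rcases eq_or_lt_of_le ht.1 with h0 | h0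
      · have h1n : (1:ℝ) ≤ (n:ℝ) := by exact_mod_cast hn
        have hnβ : ((n:ℝ) - 1 + β) ≠ 0 := by nlinarith
        rw [← h0]
        simp [Real.zero_rpow hnβ, Real.zero_rpow hβ.ne', zero_div]
      · rw [Real.div_rpow (le_of_lt h0) hR.le, ← mul_div_assoc, ← Real.rpow_natCast t (n-1),
          Nat.cast_sub hn, Nat.cast_one, ← Real.rpow_add h0]
    have hp : (-1:ℝ) < (n:ℝ) - 1 + β := by
      have : (1:ℝ) ≤ (n:ℝ) := by exact_mod_cast hn
      linarith
    rw [congr2, intervalIntegral.integral_div, integral_rpow (Or.inl hp)]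
    have h0p : ((0:ℝ) ^ ((n:ℝ) - 1 + β + 1)) = 0 := by
      apply Real.zero_rpow
      have h1n : (1:ℝ) ≤ (n:ℝ) := by exact_mod_cast hn
      nlinarith
    rw [h0p, sub_zero, show (n:ℝ) - 1 + β + 1 = (n:ℝ) + β by ring, div_div,
      div_eq_div_iff (by positivity) (by positivity)]
    rw [Real.rpow_add hR]
    ring
  rw [s1, s2, s3, s4, s5, sphInt]
  ring

/-- boundary inequality following from minimality against the
α-homogeneous extension. -/
theorem boundary_inequality {n : ℕ} (hn : 2 ≤ n) {α R : ℝ} (hα : 1 < α) (hR : 0 < R)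
    (u : EuclideanSpace ℝ (Fin n) → ℝ)
    (hu : ∃ V : Set (EuclideanSpace ℝ (Fin n)), IsOpen V ∧
      closedBall (0 : EuclideanSpace ℝ (Fin n)) R ⊆ V ∧ ContDiffOn ℝ 1 u V)
    (hmin : (∫ x in ball (0 : EuclideanSpace ℝ (Fin n)) R, ‖gradient u x‖ ^ 2) ≤
      ∫ x in ball (0 : EuclideanSpace ℝ (Fin n)) R, ‖gradient (homExt n α R u) x‖ ^ 2) :
    sphereIntR n R (fun x => ⟪gradient u x, ‖x‖⁻¹ • x⟫ ^ 2 - α ^ 2 * u x ^ 2 / R ^ 2) ≤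
      sphereIntR n R (fun x => ‖gradient u x‖ ^ 2) -
        ((n : ℝ) + 2 * (α - 1)) / R *
          ∫ x in ball (0 : EuclideanSpace ℝ (Fin n)) R, ‖gradient u x‖ ^ 2 := by
  classical
  obtain ⟨V, hVopen, hVsub, hC1⟩ := hu
  have h1n : 1 ≤ n := le_trans one_le_two hn
  have h2r : (2:ℝ) ≤ (n:ℝ) := by exact_mod_cast hn
  have hβ : (0:ℝ) < 2 * α - 2 := by linarith
  have hc : (0:ℝ) < (n:ℝ) + (2 * α - 2) := by linarith
  haveI : Nontrivial (EuclideanSpace ℝ (Fin n)) := by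
    refine Module.nontrivial_of_finrank_pos (R := ℝ) ?_
    rw [finrank_euclideanSpace_fin]; omega
  -- continuity of the pieces
  have hgradC : ContinuousOn (gradient u) V := by
    have hf := hC1.continuousOn_fderiv_of_isOpen hVopen le_rfl
    exact (InnerProductSpace.toDual ℝ (EuclideanSpace ℝ (Fin n))).symm.continuous.comp_continuousOn hf
  have huC : ContinuousOn u V := hC1.continuousOn
  have hmemV : ∀ θ : EuclideanSpace ℝ (Fin n), ‖θ‖ = 1 → R • θ ∈ V := by
    intro θ hθ
    apply hVsub
    rw [mem_closedBall_zero_iff, norm_smul, hθ, Real.norm_eq_abs, abs_of_pos hR, mul_one]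
  -- the H function
  set Hfun : EuclideanSpace ℝ (Fin n) → ℝ := fun z =>
    (α / R * u (R • z)) ^ 2 + (‖gradient u (R • z)‖ ^ 2 - ⟪gradient u (R • z), z⟫ ^ 2) with hHfun
  -- key identity for the homogeneous extension energy
  have key : (∫ x in ball (0 : EuclideanSpace ℝ (Fin n)) R, ‖gradient (homExt n α R u) x‖ ^ 2)
      = (R ^ (n : ℝ) / ((n : ℝ) + (2 * α - 2))) * sphInt n Hfun := by
    rw [← aux_polar_integral h1n hR hβ Hfun]
    refine setIntegral_congr_ae measurableSet_ball ?_
    have h0 : ∀ᵐ x : EuclideanSpace ℝ (Fin n) ∂volume, x ≠ 0 := by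
      rw [ae_iff]
      simpa using measure_singleton (0 : EuclideanSpace ℝ (Fin n))
    filter_upwards [h0] with x hx _hball
    have hr : (0:ℝ) < ‖x‖ := norm_pos_iff.2 hx
    have hθn : ‖(‖x‖⁻¹ : ℝ) • x‖ = 1 := by
      rw [norm_smul, norm_inv, norm_norm, inv_mul_cancel₀ hr.ne']
    have hud : DifferentiableAt ℝ u (R • ((‖x‖⁻¹ : ℝ) • x)) :=
      (hC1.differentiableOn one_ne_zero).differentiableAt
        (hVopen.mem_nhds (hmemV _ hθn))
    have hG : HasGradientAt (homExt n α R u)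
        ((‖x‖ / R) ^ (α - 1) •
          (((α / R) * u (R • ((‖x‖⁻¹ : ℝ) • x))) • ((‖x‖⁻¹ : ℝ) • x) +
            (gradient u (R • ((‖x‖⁻¹ : ℝ) • x)) -
              ⟪gradient u (R • ((‖x‖⁻¹ : ℝ) • x)), (‖x‖⁻¹ : ℝ) • x⟫ • ((‖x‖⁻¹ : ℝ) • x)))) x :=
      by unfold homExt; convert aux_hasGradientAt_homExt (α := α) hR u hx hud
    rw [hG.gradient, aux_norm_sq_formula hθn]
    have hexp : ((‖x‖ / R) ^ (α - 1)) ^ 2 = (‖x‖ / R) ^ (2 * α - 2) := by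
      rw [← Real.rpow_natCast ((‖x‖ / R) ^ (α - 1)) 2, ← Real.rpow_mul (by positivity)]
      norm_num
      ring_nf
    rw [hexp, hHfun]
  -- integrability on the sphere
  have hcont1 : Continuous fun θ : sphere (0 : EuclideanSpace ℝ (Fin n)) 1 =>
      gradient u (R • (θ : EuclideanSpace ℝ (Fin n))) := by
    refine hgradC.comp_continuous (continuous_subtype_val.const_smul R) fun θ => ?_
    exact hmemV _ (mem_sphere_zero_iff_norm.1 θ.2)
  have hcont2 : Continuous fun θ : sphere (0 : EuclideanSpace ℝ (Fin n)) 1 =>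
      u (R • (θ : EuclideanSpace ℝ (Fin n))) := by
    refine huC.comp_continuous (continuous_subtype_val.const_smul R) fun θ => ?_
    exact hmemV _ (mem_sphere_zero_iff_norm.1 θ.2)
  have hint1 : Integrable (fun θ : sphere (0 : EuclideanSpace ℝ (Fin n)) 1 =>
      ⟪gradient u (R • (θ : EuclideanSpace ℝ (Fin n))), (θ : EuclideanSpace ℝ (Fin n))⟫ ^ 2
        - α ^ 2 * u (R • (θ : EuclideanSpace ℝ (Fin n))) ^ 2 / R ^ 2)
      ((volume : Measure (EuclideanSpace ℝ (Fin n))).toSphere) := by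
    apply Continuous.integrable_of_hasCompactSupport
    · exact ((hcont1.inner continuous_subtype_val).pow 2).sub
        ((continuous_const.mul (hcont2.pow 2)).div_const _)
    · exact HasCompactSupport.of_compactSpace _
  have hint2 : Integrable (fun θ : sphere (0 : EuclideanSpace ℝ (Fin n)) 1 =>
      Hfun (θ : EuclideanSpace ℝ (Fin n)))
      ((volume : Measure (EuclideanSpace ℝ (Fin n))).toSphere) := by
    apply Continuous.integrable_of_hasCompactSupport
    · exact ((continuous_const.mul hcont2).pow 2).add
        (((hcont1.norm.pow 2)).sub ((hcont1.inner continuous_subtype_val).pow 2))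
    · exact HasCompactSupport.of_compactSpace _
  -- splitting of the sphere integral
  have hsplit : sphInt n (fun θ => ‖gradient u (R • θ)‖ ^ 2)
      = sphInt n (fun θ => ⟪gradient u (R • θ), θ⟫ ^ 2 - α ^ 2 * u (R • θ) ^ 2 / R ^ 2)
        + sphInt n Hfun := by
    rw [sphInt, sphInt, sphInt, ← integral_add hint1 hint2]
    refine integral_congr_ae (Eventually.of_forall fun θ => ?_)
    rw [hHfun]
    have hR2 : (R:ℝ) ^ 2 ≠ 0 := by positivity
    field_simp
    ring
  -- rewrite the LHS integrand
  have hLHS : sphInt n (fun θ =>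
        ⟪gradient u (R • θ), ‖R • θ‖⁻¹ • (R • θ)⟫ ^ 2 - α ^ 2 * u (R • θ) ^ 2 / R ^ 2)
      = sphInt n (fun θ => ⟪gradient u (R • θ), θ⟫ ^ 2 - α ^ 2 * u (R • θ) ^ 2 / R ^ 2) := by
    rw [sphInt, sphInt]
    refine integral_congr_ae (Eventually.of_forall fun θ => ?_)
    have hθ : ‖(θ : EuclideanSpace ℝ (Fin n))‖ = 1 := mem_sphere_zero_iff_norm.1 θ.2
    have : ‖R • (θ : EuclideanSpace ℝ (Fin n))‖⁻¹ • (R • (θ : EuclideanSpace ℝ (Fin n)))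
        = (θ : EuclideanSpace ℝ (Fin n)) := by
      rw [norm_smul, hθ, Real.norm_eq_abs, abs_of_pos hR, mul_one, smul_smul,
        inv_mul_cancel₀ hR.ne', one_smul]
    simp only [this]
  -- final arithmetic
  rw [sphereIntR, sphereIntR]
  set T1 := sphInt n (fun θ => ⟪gradient u (R • θ), θ⟫ ^ 2 - α ^ 2 * u (R • θ) ^ 2 / R ^ 2) with hT1
  set T3 := sphInt n Hfun with hT3
  set B := ∫ x in ball (0 : EuclideanSpace ℝ (Fin n)) R, ‖gradient u x‖ ^ 2 with hB
  have hmin' : B ≤ (R ^ (n : ℝ) / ((n : ℝ) + (2 * α - 2))) * T3 := by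
    rw [hT3, ← key]; exact hmin
  have hcR : (0:ℝ) < ((n:ℝ) + 2 * (α - 1)) / R := by
    apply div_pos; linarith; exact hR
  have hstep : ((n:ℝ) + 2 * (α - 1)) / R * B ≤ R ^ ((n:ℝ) - 1) * T3 := by
    have h := mul_le_mul_of_nonneg_left hmin' hcR.le
    calc ((n:ℝ) + 2 * (α - 1)) / R * B
        ≤ ((n:ℝ) + 2 * (α - 1)) / R * ((R ^ (n : ℝ) / ((n : ℝ) + (2 * α - 2))) * T3) := h
      _ = R ^ ((n:ℝ) - 1) * T3 := by
          rw [Real.rpow_sub hR, Real.rpow_one]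
          rw [show ((n:ℝ) + 2 * (α - 1)) = (n:ℝ) + (2 * α - 2) by ring]
          field_simp [hc.ne', show ((n:ℝ) + 2 * (α - 1)) ≠ 0 by linarith]
  have hgoalL : sphInt n (fun θ =>
        ⟪gradient u (R • θ), ‖R • θ‖⁻¹ • (R • θ)⟫ ^ 2 - α ^ 2 * u (R • θ) ^ 2 / R ^ 2) = T1 :=
    hLHS
  have hgoalR : sphInt n (fun θ => ‖gradient u (R • θ)‖ ^ 2) = T1 + T3 := hsplit
  rw [hgoalL, hgoalR]
  have expand : R ^ ((n:ℝ) - 1) * (T1 + T3) = R ^ ((n:ℝ) - 1) * T1 + R ^ ((n:ℝ) - 1) * T3 := by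
    ring
  linarith [hstep]
end
end

section
/- Let n ≥ 2, β ∈ (0,1), α = 1 + β, and 0 < s₁ < s₂. Let (v_m) be a sequence of continuously differentiable functions on a neighborhood of the closed annulus {x : s₁ ≤ |x| ≤ s₂} in ℝⁿ such that v_m and ∇v_m converge uniformly on the closed annulus to v₀ and ∇v₀ respectively, where v₀ is continuously differentiable there. If ∫_{s₁}^{s₂} R^{-(1+2(α−1))} [ ∫_{S^{n-1}} (∂_ν v_m(Rθ) − α v_m(Rθ)/R)² dθ ] dR → 0 as m → ∞, then ∂_ν v₀(x) = α v₀(x)/|x| for every x in the open annulus {x : s₁ < |x| < s₂}; consequently v₀(tx) = t^α v₀(x) whenever x, tx lie in the annulus with t > 0. -/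
open MeasureTheory Metric Set Filter
open scoped RealInnerProductSpace Topology Classical

noncomputable section

/-! In polar coordinates `x = Rθ` the integrand is the square of the defect `∂_ν v - α v / R`,
and `C¹` convergence makes the defects of `v_m` converge uniformly to that of `v₀`. If the
defect of `v₀` were nonzero somewhere, by continuity it would stay away from zero on a box
`[a, b] × C` with `C` open in the sphere, so for large `m` the defect integrals of `v_m` would
be bounded below by a fixed positive constant (the surface measure charges open sets).
Along each ray the resulting ODE `f' = α f / s` has the first integral `f(s) s^{-α}`, which gives
homogeneity. -/

lemma mul_le_intervalIntegral_of_le_on {φ : ℝ → ℝ} {s₁ s₂ a b c : ℝ} (hab : a ≤ b)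
    (hsub : Icc a b ⊆ Icc s₁ s₂) (hφ : IntervalIntegrable φ volume s₁ s₂)
    (hφ0 : ∀ R ∈ Icc s₁ s₂, 0 ≤ φ R) (hc : ∀ R ∈ Icc a b, c ≤ φ R) :
    (b - a) * c ≤ ∫ R in s₁..s₂, φ R := by
  obtain ⟨hs₁a, hbs₂⟩ := (Icc_subset_Icc_iff hab).1 hsub
  have hφab : IntervalIntegrable φ volume a b :=
    hφ.mono_set (by rwa [uIcc_of_le hab, uIcc_of_le (hs₁a.trans (hab.trans hbs₂))])
  calc (b - a) * c = ∫ _ in a..b, c := by simp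
    _ ≤ ∫ R in a..b, φ R := intervalIntegral.integral_mono_on hab intervalIntegrable_const hφab hc
    _ ≤ ∫ R in s₁..s₂, φ R :=
      intervalIntegral.integral_mono_interval hs₁a hab hbs₂
        ((ae_restrict_iff' measurableSet_Ioc).2
          (.of_forall fun R hR => hφ0 R (Ioc_subset_Icc_self hR))) hφ

lemma sq_mul_measureReal_le_integral_sq {X : Type*} [MeasurableSpace X] {μ : Measure X}
    [IsFiniteMeasure μ] {f : X → ℝ} (hf : Integrable (fun x => f x ^ 2) μ) {C : Set X}
    (hC : MeasurableSet C) {c : ℝ} (hc : 0 ≤ c) (hfC : ∀ x ∈ C, c ≤ |f x|) :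
    c ^ 2 * μ.real C ≤ ∫ x, f x ^ 2 ∂μ :=
  calc c ^ 2 * μ.real C ≤ ∫ x in C, f x ^ 2 ∂μ :=
        setIntegral_ge_of_const_le_real hC (measure_ne_top μ C)
          (fun x hx => by simpa only [sq_abs] using pow_le_pow_left₀ hc (hfC x hx) 2)
          hf.integrableOn
    _ ≤ ∫ x, f x ^ 2 ∂μ := setIntegral_le_integral hf (.of_forall fun x => sq_nonneg (f x))

lemma mul_le_intervalIntegral_mul_integral_sq {X : Type*} [TopologicalSpace X] [CompactSpace X]
    [MeasurableSpace X] [OpensMeasurableSpace X] {μ : Measure X} [IsFiniteMeasure μ]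
    {F : ℝ × X → ℝ} {w : ℝ → ℝ} {s₁ s₂ a b κ c : ℝ} {C : Set X}
    (hF : ContinuousOn F (Icc s₁ s₂ ×ˢ univ)) (hw : ContinuousOn w (Icc s₁ s₂))
    (hw0 : ∀ R ∈ Icc s₁ s₂, 0 ≤ w R) (hab : a ≤ b) (hsub : Icc a b ⊆ Icc s₁ s₂)
    (hκ : ∀ R ∈ Icc a b, κ ≤ w R) (hC : MeasurableSet C) (hc : 0 ≤ c)
    (hFC : ∀ R ∈ Icc a b, ∀ x ∈ C, c ≤ |F (R, x)|) :
    (b - a) * (κ * (c ^ 2 * μ.real C)) ≤ ∫ R in s₁..s₂, w R * ∫ x, F (R, x) ^ 2 ∂μ := by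
  have hs : s₁ ≤ s₂ := (hsub ⟨hab, le_rfl⟩).1.trans (hsub ⟨hab, le_rfl⟩).2
  have hG : ContinuousOn (fun R => ∫ x, F (R, x) ^ 2 ∂μ) (Icc s₁ s₂) :=
    continuousOn_integral_of_compact_support isCompact_univ (hF.pow 2) (by simp)
  refine mul_le_intervalIntegral_of_le_on hab hsub ((hw.mul hG).intervalIntegrable_of_Icc hs)
    (fun R hR => mul_nonneg (hw0 R hR) (integral_nonneg fun x => sq_nonneg _)) fun R hR => ?_
  have hslice : Continuous fun x => F (R, x) :=
    hF.comp_continuous (.prodMk_right R) fun x => ⟨hsub hR, mem_univ x⟩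
  exact mul_le_mul (hκ R hR)
    (sq_mul_measureReal_le_integral_sq
      ((hslice.pow 2).integrable_of_hasCompactSupport (.of_compactSpace _)) hC hc (hFC R hR))
    (by positivity) (hw0 R (hsub hR))

lemma exists_Icc_prod_subset_of_eventually {X : Type*} [TopologicalSpace X]
    {P : ℝ × X → Prop} {R₀ : ℝ} {x₀ : X} (h : ∀ᶠ p in 𝓝 (R₀, x₀), P p) :
    ∃ a b, a < b ∧ ∃ C : Set X, IsOpen C ∧ x₀ ∈ C ∧ ∀ R ∈ Icc a b, ∀ x ∈ C, P (R, x) := by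
  rw [nhds_prod_eq] at h
  obtain ⟨pa, hpa, pb, hpb, hP⟩ := eventually_prod_iff.1 h
  obtain ⟨ε, hε, hball⟩ := Metric.eventually_nhds_iff_ball.1 hpa
  obtain ⟨C, hCsub, hC, hx₀⟩ := mem_nhds_iff.1 hpb
  refine ⟨R₀ - ε / 2, R₀ + ε / 2, by linarith, C, hC, hx₀,
    fun R hR x hx => hP (hball R ?_) (hCsub hx)⟩
  rw [Real.ball_eq_Ioo]
  exact ⟨by linarith [hR.1], by linarith [hR.2]⟩

lemma eq_div_rpow_mul_of_hasDerivAt {φ : ℝ → ℝ} {α s₁ s₂ : ℝ} (hs₁ : 0 ≤ s₁)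
    (hφ : ∀ s ∈ Ioo s₁ s₂, HasDerivAt φ (α * φ s / s) s) {r r' : ℝ} (hr : r ∈ Ioo s₁ s₂)
    (hr' : r' ∈ Ioo s₁ s₂) : φ r' = (r' / r) ^ α * φ r := by
  have hpos : ∀ s ∈ Ioo s₁ s₂, 0 < s := fun s hs => hs₁.trans_lt hs.1
  have hderiv : ∀ s ∈ Ioo s₁ s₂, HasDerivAt (fun s => φ s * s ^ (-α)) 0 s := by
    intro s hs
    refine ((hφ s hs).mul (Real.hasDerivAt_rpow_const (Or.inl (hpos s hs).ne'))).congr_deriv ?_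
    rw [Real.rpow_sub_one (hpos s hs).ne']
    field_simp
    ring
  have hconst := isOpen_Ioo.is_const_of_deriv_eq_zero isPreconnected_Ioo
    (fun s hs => (hderiv s hs).differentiableAt.differentiableWithinAt)
    (fun s hs => (hderiv s hs).deriv) hr' hr
  rw [Real.div_rpow (hpos r' hr').le (hpos r hr).le, Real.rpow_neg (hpos r' hr').le,
    Real.rpow_neg (hpos r hr).le] at *
  have := Real.rpow_pos_of_pos (hpos r hr) α
  have := Real.rpow_pos_of_pos (hpos r' hr') α
  field_simp at hconst ⊢
  linarith

section Annulus

variable {E : Type*} [NormedAddCommGroup E]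

def closedAnnulus (s₁ s₂ : ℝ) : Set E := {x | s₁ ≤ ‖x‖ ∧ ‖x‖ ≤ s₂}

lemma closedAnnulus_mem_nhds {s₁ s₂ : ℝ} {x : E} (hx₁ : s₁ < ‖x‖) (hx₂ : ‖x‖ < s₂) :
    closedAnnulus s₁ s₂ ∈ 𝓝 x :=
  mem_of_superset (((isOpen_lt continuous_const continuous_norm).inter
    (isOpen_lt continuous_norm continuous_const)).mem_nhds ⟨hx₁, hx₂⟩)
    fun _ hy => ⟨hy.1.le, hy.2.le⟩

variable [InnerProductSpace ℝ E]

lemma smul_mem_closedAnnulus {s₁ s₂ R : ℝ} (hs₁ : 0 ≤ s₁) (hR : R ∈ Icc s₁ s₂)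
    (θ : sphere (0 : E) 1) : R • (θ : E) ∈ closedAnnulus s₁ s₂ := by
  show s₁ ≤ _ ∧ _ ≤ s₂
  rw [norm_smul_of_nonneg (hs₁.trans hR.1), norm_eq_of_mem_sphere, mul_one]
  exact hR

variable [CompleteSpace E]

lemma ContDiffOn.continuousOn_gradient_of_subset {u : E → ℝ} {V K : Set E}
    (hu : ContDiffOn ℝ 1 u V) (hV : IsOpen V) (hKV : K ⊆ V) : ContinuousOn (gradient u) K :=
  ((InnerProductSpace.toDual ℝ E).symm.continuous.comp_continuousOn
    (hu.continuousOn_fderiv_of_isOpen hV le_rfl)).mono hKV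

def radialDefect (α : ℝ) (u : E → ℝ) (p : ℝ × sphere (0 : E) 1) : ℝ :=
  ⟪gradient u (p.1 • (p.2 : E)), p.2⟫ - α * u (p.1 • (p.2 : E)) / p.1

variable {α s₁ s₂ : ℝ}

lemma continuousOn_radialDefect (hs₁ : 0 < s₁) {u : E → ℝ}
    (hu : ContinuousOn u (closedAnnulus s₁ s₂))
    (hgu : ContinuousOn (gradient u) (closedAnnulus s₁ s₂)) :
    ContinuousOn (radialDefect α u) (Icc s₁ s₂ ×ˢ univ) := by
  have hpolar :
      ContinuousOn (fun p : ℝ × sphere (0 : E) 1 => p.1 • (p.2 : E)) (Icc s₁ s₂ ×ˢ univ) :=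
    (continuous_fst.smul (continuous_subtype_val.comp continuous_snd)).continuousOn
  have hmaps : MapsTo (fun p : ℝ × sphere (0 : E) 1 => p.1 • (p.2 : E)) (Icc s₁ s₂ ×ˢ univ)
      (closedAnnulus s₁ s₂) := fun p hp => smul_mem_closedAnnulus hs₁.le hp.1 p.2
  exact ((hgu.comp hpolar hmaps).inner
    (continuous_subtype_val.comp continuous_snd).continuousOn).sub
    ((continuousOn_const.mul (hu.comp hpolar hmaps)).div continuous_fst.continuousOn
      fun p hp => (hs₁.trans_le hp.1.1).ne')

lemma abs_radialDefect_sub_le (hs₁ : 0 < s₁) (u w : E → ℝ) {p : ℝ × sphere (0 : E) 1}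
    (hp : s₁ ≤ p.1) :
    |radialDefect α u p - radialDefect α w p| ≤
      ‖gradient u (p.1 • (p.2 : E)) - gradient w (p.1 • (p.2 : E))‖
        + |α| / s₁ * |u (p.1 • (p.2 : E)) - w (p.1 • (p.2 : E))| := by
  obtain ⟨R, θ⟩ := p
  have hR : 0 < R := hs₁.trans_le hp
  have hgrad := abs_real_inner_le_norm (gradient u (R • (θ : E)) - gradient w (R • (θ : E))) θ
  rw [norm_eq_of_mem_sphere, mul_one] at hgrad
  have hval : |α * (u (R • (θ : E)) - w (R • (θ : E))) / R|
      ≤ |α| / s₁ * |u (R • (θ : E)) - w (R • (θ : E))| := by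
    rw [abs_div, abs_mul, abs_of_pos hR, div_mul_eq_mul_div]
    gcongr
  calc |radialDefect α u (R, θ) - radialDefect α w (R, θ)|
      = |⟪gradient u (R • (θ : E)) - gradient w (R • (θ : E)), θ⟫
          - α * (u (R • (θ : E)) - w (R • (θ : E))) / R| := by
        simp only [radialDefect, inner_sub_left]; ring_nf
    _ ≤ _ := (abs_sub _ _).trans (add_le_add hgrad hval)

lemma tendstoUniformlyOn_radialDefect {ι : Type*} {l : Filter ι} (hs₁ : 0 < s₁)
    {u : ι → E → ℝ} {u₀ : E → ℝ} (hu : TendstoUniformlyOn u u₀ l (closedAnnulus s₁ s₂))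
    (hgu : TendstoUniformlyOn (fun i => gradient (u i)) (gradient u₀) l (closedAnnulus s₁ s₂)) :
    TendstoUniformlyOn (fun i => radialDefect α (u i)) (radialDefect α u₀) l
      (Icc s₁ s₂ ×ˢ univ) := by
  rw [Metric.tendstoUniformlyOn_iff] at hu hgu ⊢
  intro ε hε
  set K := |α| / s₁ + 1
  have hK : 0 < K := by positivity
  filter_upwards [hgu (ε / 2) (half_pos hε), hu (ε / 2 / K) (by positivity)] with i hgi hi p hp
  have hx := smul_mem_closedAnnulus hs₁.le hp.1 p.2
  have hval : |α| / s₁ * |u₀ (p.1 • (p.2 : E)) - u i (p.1 • (p.2 : E))| ≤ ε / 2 := by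
    have := hi _ hx
    rw [Real.dist_eq] at this
    calc _ ≤ K * |u₀ (p.1 • (p.2 : E)) - u i (p.1 • (p.2 : E))| := by gcongr; linarith
      _ ≤ K * (ε / 2 / K) := by gcongr
      _ = ε / 2 := by field_simp
  rw [Real.dist_eq]
  have := abs_radialDefect_sub_le (α := α) hs₁ u₀ (u i) hp.1.1
  have := hgi _ hx
  rw [dist_eq_norm] at this
  linarith

lemma hasDerivAt_comp_smul_const {f : E → ℝ} {s : ℝ} {θ : E}
    (hf : DifferentiableAt ℝ f (s • θ)) :
    HasDerivAt (fun s : ℝ => f (s • θ)) ⟪gradient f (s • θ), θ⟫ s := by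
  have h := hf.hasGradientAt.hasFDerivAt.comp_hasDerivAt s ((hasDerivAt_id' s).smul_const θ)
  rwa [one_smul, InnerProductSpace.toDual_apply_apply] at h

theorem homogeneous_of_inner_gradient_eq {f : E → ℝ} (hs₁ : 0 ≤ s₁)
    (hf : ∀ x : E, s₁ < ‖x‖ → ‖x‖ < s₂ → DifferentiableAt ℝ f x)
    (hode : ∀ x : E, s₁ < ‖x‖ → ‖x‖ < s₂ → ⟪gradient f x, ‖x‖⁻¹ • x⟫ = α * f x / ‖x‖)
    {x : E} {t : ℝ} (ht : 0 < t) (hx₁ : s₁ < ‖x‖) (hx₂ : ‖x‖ < s₂) (htx₁ : s₁ < ‖t • x‖)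
    (htx₂ : ‖t • x‖ < s₂) : f (t • x) = t ^ α * f x := by
  have hx : 0 < ‖x‖ := hs₁.trans_lt hx₁
  obtain ⟨θ, hθ, hx_eq⟩ : ∃ θ : E, ‖θ‖ = 1 ∧ ‖x‖ • θ = x :=
    ⟨‖x‖⁻¹ • x, by rw [norm_smul, norm_inv, norm_norm, inv_mul_cancel₀ hx.ne'],
      smul_inv_smul₀ hx.ne' x⟩
  have hnorm : ∀ s ∈ Ioo s₁ s₂, ‖s • θ‖ = s := fun s hs => by
    rw [norm_smul_of_nonneg (hs₁.trans hs.1.le), hθ, mul_one]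
  have hφ : ∀ s ∈ Ioo s₁ s₂, HasDerivAt (fun s : ℝ => f (s • θ)) (α * f (s • θ) / s) s := by
    intro s hs
    have hs' : s₁ < ‖s • θ‖ ∧ ‖s • θ‖ < s₂ := by rw [hnorm s hs]; exact hs
    have h := hode (s • θ) hs'.1 hs'.2
    rw [hnorm s hs, inv_smul_smul₀ (hs₁.trans_lt hs.1).ne'] at h
    exact h ▸ hasDerivAt_comp_smul_const (hf _ hs'.1 hs'.2)
  have key := eq_div_rpow_mul_of_hasDerivAt hs₁ hφ ⟨hx₁, hx₂⟩ ⟨htx₁, htx₂⟩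
  rwa [norm_smul_of_nonneg ht.le, mul_div_cancel_right₀ t hx.ne', mul_smul, hx_eq] at key

variable [ProperSpace E] [MeasurableSpace E] [BorelSpace E]

theorem radialDefect_eq_zero_of_tendsto_integral {μ : Measure (sphere (0 : E) 1)}
    [IsFiniteMeasure μ] [μ.IsOpenPosMeasure] {w : ℝ → ℝ} (hw : ContinuousOn w (Icc s₁ s₂))
    (hw0 : ∀ R ∈ Icc s₁ s₂, 0 < w R) (hs₁ : 0 < s₁) {v : ℕ → E → ℝ} {v₀ : E → ℝ}
    (hv : ∀ m, ContinuousOn (v m) (closedAnnulus s₁ s₂))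
    (hgv : ∀ m, ContinuousOn (gradient (v m)) (closedAnnulus s₁ s₂))
    (hunif : TendstoUniformlyOn v v₀ atTop (closedAnnulus s₁ s₂))
    (hunif' : TendstoUniformlyOn (fun m => gradient (v m)) (gradient v₀) atTop
      (closedAnnulus s₁ s₂))
    (hint : Tendsto (fun m => ∫ R in s₁..s₂, w R * ∫ θ, radialDefect α (v m) (R, θ) ^ 2 ∂μ)
      atTop (𝓝 0)) :
    ∀ R ∈ Ioo s₁ s₂, ∀ θ, radialDefect α v₀ (R, θ) = 0 := by
  intro R₀ hR₀ θ₀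
  by_contra hne
  set d := |radialDefect α v₀ (R₀, θ₀)|
  have hd : 0 < d := abs_pos.2 hne
  have hcont₀ : ContinuousOn (radialDefect α v₀) (Icc s₁ s₂ ×ˢ univ) :=
    continuousOn_radialDefect hs₁ (hunif.continuousOn (.of_forall hv))
      (hunif'.continuousOn (.of_forall hgv))
  have hT : ∀ᶠ p in 𝓝 (R₀, θ₀), p ∈ Icc s₁ s₂ ×ˢ univ :=
    prod_mem_nhds (Icc_mem_nhds hR₀.1 hR₀.2) univ_mem
  obtain ⟨a, b, hab, C, hC, hθ₀C, hbox⟩ := exists_Icc_prod_subset_of_eventually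
    (hT.and ((hcont₀.continuousAt hT).abs.eventually_const_lt (half_lt_self hd)))
  have hsub : Icc a b ⊆ Icc s₁ s₂ := fun R hR => (hbox R hR θ₀ hθ₀C).1.1
  obtain ⟨R₁, hR₁, hmin⟩ := isCompact_Icc.exists_isMinOn (nonempty_Icc.2 hab.le) (hw.mono hsub)
  have hμC : 0 < μ.real C :=
    ENNReal.toReal_pos (hC.measure_pos μ ⟨θ₀, hθ₀C⟩).ne' (measure_ne_top μ C)
  have he : 0 < (b - a) * (w R₁ * ((d / 4) ^ 2 * μ.real C)) := by
    have := hw0 R₁ (hsub hR₁)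
    have := sub_pos.2 hab
    positivity
  obtain ⟨m, hclose, hsmall⟩ := ((Metric.tendstoUniformlyOn_iff.1
    (tendstoUniformlyOn_radialDefect (α := α) hs₁ hunif hunif') (d / 4) (by positivity)).and
    (hint.eventually_lt_const he)).exists
  refine hsmall.not_ge (mul_le_intervalIntegral_mul_integral_sq
    (continuousOn_radialDefect hs₁ (hv m) (hgv m)) hw (fun R hR => (hw0 R hR).le) hab.le hsub
    (fun R hR => hmin hR) hC.measurableSet (by positivity) fun R hR θ hθ => ?_)
  have hfar := (hbox R hR θ hθ).2
  have hnear := hclose (R, θ) ⟨hsub hR, mem_univ θ⟩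
  rw [Real.dist_eq] at hnear
  have := abs_sub_abs_le_abs_sub (radialDefect α v₀ (R, θ)) (radialDefect α (v m) (R, θ))
  linarith

end Annulus

theorem limit_is_homogeneous_general {n : ℕ} {α s₁ s₂ : ℝ}
    (hs₁ : 0 < s₁)
    (v : ℕ → EuclideanSpace ℝ (Fin n) → ℝ) (v₀ : EuclideanSpace ℝ (Fin n) → ℝ)
    (hvm : ∀ m : ℕ, ∃ V : Set (EuclideanSpace ℝ (Fin n)), IsOpen V ∧
      {x : EuclideanSpace ℝ (Fin n) | s₁ ≤ ‖x‖ ∧ ‖x‖ ≤ s₂} ⊆ V ∧ ContDiffOn ℝ 1 (v m) V)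
    (hv₀ : ContDiffOn ℝ 1 v₀ {x : EuclideanSpace ℝ (Fin n) | s₁ ≤ ‖x‖ ∧ ‖x‖ ≤ s₂})
    (hunif : TendstoUniformlyOn (fun m => v m) v₀ atTop
      {x : EuclideanSpace ℝ (Fin n) | s₁ ≤ ‖x‖ ∧ ‖x‖ ≤ s₂})
    (hunif' : TendstoUniformlyOn (fun m => gradient (v m)) (gradient v₀) atTop
      {x : EuclideanSpace ℝ (Fin n) | s₁ ≤ ‖x‖ ∧ ‖x‖ ≤ s₂})
    (hint : Tendsto (fun m =>
        ∫ R in s₁..s₂, R ^ (-(1 + 2 * (α - 1))) * sphInt n (fun θ =>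
          (⟪gradient (v m) (R • θ), θ⟫ - α * v m (R • θ) / R) ^ 2))
      atTop (nhds 0)) :
    (∀ x : EuclideanSpace ℝ (Fin n), s₁ < ‖x‖ → ‖x‖ < s₂ →
      ⟪gradient v₀ x, ‖x‖⁻¹ • x⟫ = α * v₀ x / ‖x‖) ∧
    (∀ x : EuclideanSpace ℝ (Fin n), ∀ t : ℝ, 0 < t →
      s₁ < ‖x‖ → ‖x‖ < s₂ → s₁ < ‖t • x‖ → ‖t • x‖ < s₂ →
      v₀ (t • x) = t ^ α * v₀ x) := by
  have hv : ∀ m, ContinuousOn (v m) (closedAnnulus s₁ s₂) ∧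
      ContinuousOn (gradient (v m)) (closedAnnulus s₁ s₂) := fun m => by
    obtain ⟨V, hV, hKV, hsmooth⟩ := hvm m
    exact ⟨hsmooth.continuousOn.mono hKV, hsmooth.continuousOn_gradient_of_subset hV hKV⟩
  have hdefect := radialDefect_eq_zero_of_tendsto_integral (μ := volume.toSphere)
    (continuousOn_id.rpow_const fun R hR => Or.inl (hs₁.trans_le hR.1).ne')
    (fun R hR => Real.rpow_pos_of_pos (hs₁.trans_le hR.1) _) hs₁ (fun m => (hv m).1)
    (fun m => (hv m).2) hunif hunif' hint
  have hode : ∀ x : EuclideanSpace ℝ (Fin n), s₁ < ‖x‖ → ‖x‖ < s₂ →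
      ⟪gradient v₀ x, ‖x‖⁻¹ • x⟫ = α * v₀ x / ‖x‖ := by
    intro x hx₁ hx₂
    have hx : ‖x‖ ≠ 0 := (hs₁.trans hx₁).ne'
    have h := hdefect ‖x‖ ⟨hx₁, hx₂⟩ ⟨‖x‖⁻¹ • x, by simp [norm_smul, hx]⟩
    rwa [radialDefect, sub_eq_zero, smul_inv_smul₀ hx] at h
  have hdiff : ∀ x : EuclideanSpace ℝ (Fin n), s₁ < ‖x‖ → ‖x‖ < s₂ → DifferentiableAt ℝ v₀ x :=
    fun x hx₁ hx₂ => (hv₀.differentiableOn one_ne_zero).differentiableAt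
      (closedAnnulus_mem_nhds hx₁ hx₂)
  exact ⟨hode, fun x t ht => homogeneous_of_inner_gradient_eq hs₁.le hdiff hode ht⟩

/-- if the defect integrals tend to `0` along a `C¹`-convergent sequence,
then the limit satisfies the radial ODE `∂_ν v₀ = α v₀/|x|` on the open annulus, and is
consequently homogeneous of degree `α` there. -/
theorem limit_is_homogeneous {n : ℕ} (hn : 2 ≤ n) {β α s₁ s₂ : ℝ}
    (hβ : β ∈ Set.Ioo (0 : ℝ) 1) (hα : α = 1 + β) (hs₁ : 0 < s₁) (hs : s₁ < s₂)
    (v : ℕ → EuclideanSpace ℝ (Fin n) → ℝ) (v₀ : EuclideanSpace ℝ (Fin n) → ℝ)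
    (hvm : ∀ m : ℕ, ∃ V : Set (EuclideanSpace ℝ (Fin n)), IsOpen V ∧
      {x : EuclideanSpace ℝ (Fin n) | s₁ ≤ ‖x‖ ∧ ‖x‖ ≤ s₂} ⊆ V ∧ ContDiffOn ℝ 1 (v m) V)
    (hv₀ : ContDiffOn ℝ 1 v₀ {x : EuclideanSpace ℝ (Fin n) | s₁ ≤ ‖x‖ ∧ ‖x‖ ≤ s₂})
    (hunif : TendstoUniformlyOn (fun m => v m) v₀ atTop
      {x : EuclideanSpace ℝ (Fin n) | s₁ ≤ ‖x‖ ∧ ‖x‖ ≤ s₂})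
    (hunif' : TendstoUniformlyOn (fun m => gradient (v m)) (gradient v₀) atTop
      {x : EuclideanSpace ℝ (Fin n) | s₁ ≤ ‖x‖ ∧ ‖x‖ ≤ s₂})
    (hint : Tendsto (fun m =>
        ∫ R in s₁..s₂, R ^ (-(1 + 2 * (α - 1))) * sphInt n (fun θ =>
          (⟪gradient (v m) (R • θ), θ⟫ - α * v m (R • θ) / R) ^ 2))
      atTop (nhds 0)) :
    (∀ x : EuclideanSpace ℝ (Fin n), s₁ < ‖x‖ → ‖x‖ < s₂ →
      ⟪gradient v₀ x, ‖x‖⁻¹ • x⟫ = α * v₀ x / ‖x‖) ∧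
    (∀ x : EuclideanSpace ℝ (Fin n), ∀ t : ℝ, 0 < t →
      s₁ < ‖x‖ → ‖x‖ < s₂ → s₁ < ‖t • x‖ → ‖t • x‖ < s₂ →
      v₀ (t • x) = t ^ α * v₀ x) :=
  limit_is_homogeneous_general hs₁ v v₀ hvm hv₀ hunif hunif' hint
end
end
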